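/- arXiv:0909.1019 — 13 statements merged into one kernel-verified Lean document; each statement's English description precedes it below -/
import Mathlib

section
/- Let φ(s) := exp(−exp(1/s)) for s > 0, and let ψ(t) := 1/log(log(1/t)) (the inverse of φ, defined for small t > 0). Suppose a : (0,∞) → (0,∞) satisfies C·t ≤ a(t) ≤ C'·t for all t > 0, for some constants 0 < C ≤ C'. Then for every natural number n, the quantity (ψ(a(φ(s))) − s)/s^n tends to 0 as s tends to 0 from the right. In other words, the conjugated map ψ ∘ a ∘ φ is flat on the identity at 0: ψ(a(φ(s))) − s = o(s^n) as s → 0⁺ for every n. -/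
/-! With `c = a (φ s) / φ s`, whose logarithm is bounded, `log (1 / a (φ s)) = exp (1 / s) - log c`, so
`log (log (1 / a (φ s))) = 1 / s + log (1 - exp (-1 / s) * log c) = 1 / s + ε s` with `ε s = O(exp (-1 / s))`,
which is flat at `0`. Inverting, `ψ (a (φ s)) - s = -s² ε s / (1 + s ε s)` is flat as well. -/

open Filter Set Topology Asymptotics

lemma isLittleO_exp_neg_inv_pow (n : ℕ) :
    (fun s : ℝ => Real.exp (-s⁻¹)) =o[𝓝[>] 0] (· ^ n) := by
  refine (isLittleO_iff_tendsto' ?_).2 ?_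
  · filter_upwards [self_mem_nhdsWithin] with s hs h
    exact absurd h (pow_pos hs n).ne'
  · refine ((Real.tendsto_pow_mul_exp_neg_atTop_nhds_zero n).comp
      tendsto_inv_nhdsGT_zero).congr' ?_
    filter_upwards [self_mem_nhdsWithin] with s hs
    simp [div_eq_mul_inv, mul_comm]

lemma isBigO_log_one_sub_id : (fun u : ℝ => Real.log (1 - u)) =O[𝓝 0] fun u => u := by
  have hd : DifferentiableAt ℝ (fun u : ℝ => Real.log (1 - u)) 0 := by fun_prop (disch := norm_num)
  simpa using hd.isBigO_sub

lemma isBigO_log_exp_sub_sub {α : Type*} {l : Filter α} {x d : α → ℝ}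
    (hx : Tendsto x l atTop) (hd : d =O[l] fun _ => (1 : ℝ)) :
    (fun s => Real.log (Real.exp (x s) - d s) - x s) =O[l] fun s => Real.exp (-x s) := by
  set u := fun s => d s * Real.exp (-x s)
  have hu : u =O[l] fun s => Real.exp (-x s) := by
    simpa using hd.mul (isBigO_refl (fun s => Real.exp (-x s)) l)
  have hu0 : Tendsto u l (𝓝 0) := hu.trans_tendsto (Real.tendsto_exp_neg_atTop_nhds_zero.comp hx)
  refine ((isBigO_log_one_sub_id.comp_tendsto hu0).trans hu).congr' ?_ EventuallyEq.rfl
  filter_upwards [hu0.eventually (eventually_lt_nhds one_pos)] with s hs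
  have hsplit : Real.exp (x s) - d s = Real.exp (x s) * (1 - u s) := by
    rw [mul_sub, mul_one, mul_left_comm, ← Real.exp_add, add_neg_cancel, Real.exp_zero, mul_one]
  rw [Function.comp_apply, hsplit, Real.log_mul (Real.exp_pos _).ne' (by linarith), Real.log_exp]
  ring

lemma tendsto_inv_inv_add_sub_div_pow {ε : ℝ → ℝ} {n : ℕ}
    (h0 : Tendsto ε (𝓝[>] 0) (𝓝 0)) (hn : ε =o[𝓝[>] 0] (· ^ n)) :
    Tendsto (fun s => ((s⁻¹ + ε s)⁻¹ - s) / s ^ n) (𝓝[>] 0) (𝓝 0) := by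
  have hs : Tendsto (fun s : ℝ => s) (𝓝[>] 0) (𝓝 0) := tendsto_nhdsWithin_of_tendsto_nhds tendsto_id
  have hden : Tendsto (fun s => 1 + s * ε s) (𝓝[>] 0) (𝓝 1) := by
    simpa using (hs.mul h0).const_add 1
  -- `((s⁻¹ + ε s)⁻¹ - s) / s ^ n = -(s ^ 2 * (ε s / s ^ n)) / (1 + s * ε s)`
  have hlim := ((hs.pow 2).mul hn.tendsto_div_nhds_zero).neg.div hden one_ne_zero
  rw [mul_zero, neg_zero, zero_div] at hlim
  refine hlim.congr' ?_
  filter_upwards [self_mem_nhdsWithin, hden.eventually_ne one_ne_zero] with s (hs : 0 < s) hne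
  have hinv : s⁻¹ + ε s = (1 + s * ε s) / s := by field_simp
  rw [Pi.div_apply, hinv, inv_div]
  field_simp
  ring

lemma abs_log_le_max_of_mem_Icc {c C C' : ℝ} (hC : 0 < C) (hc : c ∈ Icc C C') :
    |Real.log c| ≤ max |Real.log C| |Real.log C'| :=
  abs_le_max_abs_abs (Real.log_le_log hC hc.1) (Real.log_le_log (hC.trans_le hc.1) hc.2)

theorem stmt2_general (a : ℝ → ℝ) (C C' : ℝ) (hC : 0 < C)
    (hbound : ∀ t : ℝ, 0 < t → C * t ≤ a t ∧ a t ≤ C' * t) (n : ℕ) :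
    Filter.Tendsto
      (fun s : ℝ =>
        ((Real.log (Real.log (1 / a (Real.exp (-Real.exp (1 / s))))))⁻¹ - s) / s ^ n)
      (nhdsWithin 0 (Set.Ioi 0)) (nhds 0) := by
  set φ : ℝ → ℝ := fun s => Real.exp (-Real.exp (1 / s)) with hφ
  set d : ℝ → ℝ := fun s => Real.log (a (φ s) / φ s)
  have hd : d =O[𝓝[>] 0] fun _ => (1 : ℝ) := by
    refine IsBigO.of_bound (max |Real.log C| |Real.log C'|) (Eventually.of_forall fun s => ?_)
    have hφ0 : 0 < φ s := Real.exp_pos _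
    obtain ⟨hlo, hhi⟩ := hbound _ hφ0
    simpa using abs_log_le_max_of_mem_Icc hC ⟨(le_div_iff₀ hφ0).2 hlo, (div_le_iff₀ hφ0).2 hhi⟩
  have hlog : ∀ s, Real.log (1 / a (φ s)) = Real.exp s⁻¹ - d s := fun s => by
    have hφ0 : 0 < φ s := Real.exp_pos _
    have ha : 0 < a (φ s) := (mul_pos hC hφ0).trans_le (hbound _ hφ0).1
    have hlogφ : Real.log (φ s) = -Real.exp s⁻¹ := by rw [hφ, Real.log_exp, one_div]
    simp only [d]
    rw [one_div, Real.log_inv, Real.log_div ha.ne' hφ0.ne', hlogφ]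
    ring
  set ε : ℝ → ℝ := fun s => Real.log (Real.log (1 / a (φ s))) - s⁻¹
  have hε : ∀ k : ℕ, ε =o[𝓝[>] 0] (· ^ k) := fun k => by
    refine ((isBigO_log_exp_sub_sub tendsto_inv_nhdsGT_zero hd).congr_left fun s => ?_).trans_isLittleO
      (isLittleO_exp_neg_inv_pow k)
    simp only [ε, hlog]
  have h0 : Tendsto ε (𝓝[>] 0) (𝓝 0) := by simpa using (hε 0).tendsto_div_nhds_zero
  simpa [ε, φ] using tendsto_inv_inv_add_sub_div_pow h0 (hε n)

/-- with φ(s) = exp(−exp(1/s)) and ψ(t) = 1/log(log(1/t)), if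
C·t ≤ a(t) ≤ C'·t for all t > 0 (0 < C ≤ C'), then for every n : ℕ,
(ψ(a(φ(s))) − s)/s^n → 0 as s → 0⁺. -/
theorem stmt2 (a : ℝ → ℝ) (C C' : ℝ) (hC : 0 < C) (hCC' : C ≤ C')
    (hbound : ∀ t : ℝ, 0 < t → C * t ≤ a t ∧ a t ≤ C' * t) (n : ℕ) :
    Filter.Tendsto
      (fun s : ℝ =>
        ((Real.log (Real.log (1 / a (Real.exp (-Real.exp (1 / s))))))⁻¹ - s) / s ^ n)
      (nhdsWithin 0 (Set.Ioi 0)) (nhds 0) :=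
  stmt2_general a C C' hC hbound n
end

section
/- There exist C^∞ diffeomorphisms a, b of the open halfline (0,∞) (strictly increasing smooth bijections of (0,∞) with smooth inverses) and constants 0 < C ≤ C' such that C·t ≤ a(t) ≤ C'·t and C·t ≤ b(t) ≤ C'·t for all t > 0, and such that a and b generate a nonabelian free group of bijections of (0,∞): the group homomorphism from the free group on two generators to the group of bijections of (0,∞) sending the two generators to a and b respectively is injective. -/
/-!
Conjugating by `exp : ℝ ≃o (0, ∞)` turns a diffeomorphism of `ℝ` at distance at most `1` from the
identity into a diffeomorphism `a` of `(0, ∞)` with `e⁻¹ t ≤ a t ≤ e t`. On `ℝ` we take the lifts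
`f c x = x + ψ (x - c)` of circle diffeomorphisms, where `ψ` is a `1`-periodic odd trigonometric
polynomial with `ψ' > -1` and `ψ (3/8) < -1/4`. Then `f c` maps everything at distance `≥ 1/8`
from `c + 1/2 + ℤ` to within `1/8` of `c + ℤ`. For `c = 0, 1/4` the four `1/8`-neighbourhoods
of `ℤ`, `1/4 + ℤ`, `1/2 + ℤ`, `3/4 + ℤ` are disjoint, and the ping-pong lemma applies.
-/

open Set Real

namespace HalflineFreeGroup

noncomputable section

/- `T` is the odd trigonometric polynomial with `T' θ = sin (θ/2) ^ 12 - 231/1024`, `231/1024`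
being the mean of `sin ^ 12`. For `ψ x = 21/(10π) · T (2πx)` this gives
`ψ' ≥ -(21/5)·(231/1024) > -1`, while `ψ'` stays near this minimum on most of `[0, 3/8]`,
which pushes `ψ (3/8)` below `-1/4`. -/
def T (θ : ℝ) : ℝ :=
  -(99/256) * sin θ + 495/4096 * sin (2*θ) - 55/1536 * sin (3*θ) + 33/4096 * sin (4*θ)
    - 3/2560 * sin (5*θ) + 1/12288 * sin (6*θ)

lemma one_sub_cos_div_two_pow_six (θ : ℝ) :
    ((1 - cos θ) / 2) ^ 6 - 231/1024 =
      -(99/256) * cos θ + 495/2048 * cos (2*θ) - 55/512 * cos (3*θ) + 33/1024 * cos (4*θ)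
        - 3/512 * cos (5*θ) + 1/2048 * cos (6*θ) := by
  have h4 : cos (4*θ) = 2 * cos (2*θ) ^ 2 - 1 := by
    rw [show 4*θ = 2*(2*θ) by ring, cos_two_mul]
  have h5 : cos (5*θ) = 2 * cos θ * cos (4*θ) - cos (3*θ) := by
    rw [show 5*θ = 4*θ + θ by ring, show 3*θ = 4*θ - θ by ring, cos_add, cos_sub]; ring
  have h6 : cos (6*θ) = 2 * cos (3*θ) ^ 2 - 1 := by
    rw [show 6*θ = 2*(3*θ) by ring, cos_two_mul]
  rw [h6, h5, h4, cos_three_mul, cos_two_mul]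
  ring

lemma hasDerivAt_T (θ : ℝ) : HasDerivAt T (((1 - cos θ) / 2) ^ 6 - 231/1024) θ := by
  have h (k : ℝ) : HasDerivAt (fun θ => sin (k * θ)) (cos (k * θ) * k) θ := by
    simpa using ((hasDerivAt_id θ).const_mul k).sin
  have H := (((((((hasDerivAt_sin θ).const_mul (-(99/256))).add ((h 2).const_mul (495/4096))).sub
    ((h 3).const_mul (55/1536))).add ((h 4).const_mul (33/4096))).sub
    ((h 5).const_mul (3/2560))).add ((h 6).const_mul (1/12288)))
  rw [one_sub_cos_div_two_pow_six]
  exact (H : HasDerivAt T _ θ).congr_deriv (by ring)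

lemma T_periodic : Function.Periodic T (2 * π) := by
  intro θ
  have h (k : ℕ) : sin (k * (θ + 2 * π)) = sin (k * θ) := by
    rw [mul_add, sin_add_nat_mul_two_pi]
  have h2 := h 2; have h3 := h 3; have h4 := h 4; have h5 := h 5; have h6 := h 6
  simp only [Nat.cast_ofNat] at h2 h3 h4 h5 h6
  simp only [T, sin_add_two_pi, h2, h3, h4, h5, h6]

lemma T_neg (θ : ℝ) : T (-θ) = -T θ := by
  simp only [T, mul_neg, sin_neg]; ring

lemma abs_T_le (θ : ℝ) : |T θ| ≤ 3/5 := by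
  have := neg_one_le_sin θ; have := sin_le_one θ
  have := neg_one_le_sin (2*θ); have := sin_le_one (2*θ)
  have := neg_one_le_sin (3*θ); have := sin_le_one (3*θ)
  have := neg_one_le_sin (4*θ); have := sin_le_one (4*θ)
  have := neg_one_le_sin (5*θ); have := sin_le_one (5*θ)
  have := neg_one_le_sin (6*θ); have := sin_le_one (6*θ)
  rw [abs_le]; constructor <;> simp only [T] <;> linarith

lemma T_three_pi_div_four : T (3 * π / 4) < -(3/8) := by
  have h1 : sin (3 * π / 4) = √2 / 2 := by
    rw [show 3 * π / 4 = π - π / 4 by ring, sin_pi_sub, sin_pi_div_four]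
  have h2 : sin (2 * (3 * π / 4)) = -1 := by
    rw [show 2 * (3 * π / 4) = π / 2 + π by ring, sin_add_pi, sin_pi_div_two]
  have h3 : sin (3 * (3 * π / 4)) = √2 / 2 := by
    rw [show 3 * (3 * π / 4) = π / 4 + 2 * π by ring, sin_add_two_pi, sin_pi_div_four]
  have h4 : sin (4 * (3 * π / 4)) = 0 := by
    rw [show 4 * (3 * π / 4) = ((3 : ℤ) : ℝ) * π by push_cast; ring, sin_int_mul_pi]
  have h5 : sin (5 * (3 * π / 4)) = -(√2 / 2) := by
    rw [show 5 * (3 * π / 4) = -(π / 4) + ((2 : ℕ) : ℝ) * (2 * π) by push_cast; ring,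
      sin_add_nat_mul_two_pi, sin_neg, sin_pi_div_four]
  have h6 : sin (6 * (3 * π / 4)) = 1 := by
    rw [show 6 * (3 * π / 4) = π / 2 + ((2 : ℕ) : ℝ) * (2 * π) by push_cast; ring,
      sin_add_nat_mul_two_pi, sin_pi_div_two]
  have hsqrt : (1.414 : ℝ) < √2 := by
    rw [lt_sqrt (by norm_num)]; norm_num
  simp only [T, h1, h2, h3, h4, h5, h6]
  linarith

def ψ (x : ℝ) : ℝ := 21 / (10 * π) * T (2 * π * x)

def ψ' (x : ℝ) : ℝ := 21 / 5 * (((1 - cos (2 * π * x)) / 2) ^ 6 - 231/1024)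

lemma hasDerivAt_ψ (x : ℝ) : HasDerivAt ψ (ψ' x) x := by
  have H := ((hasDerivAt_T (2 * π * x)).comp x ((hasDerivAt_id x).const_mul (2 * π))).const_mul
    (21 / (10 * π))
  refine (H : HasDerivAt ψ _ x).congr_deriv ?_
  simp only [ψ', mul_one]
  field_simp
  ring

lemma contDiff_ψ {n : WithTop ℕ∞} : ContDiff ℝ n ψ := by
  unfold ψ T
  fun_prop

lemma ψ_periodic : Function.Periodic ψ 1 := by
  intro x
  simp only [ψ, mul_add, mul_one, T_periodic _]

lemma ψ_neg (x : ℝ) : ψ (-x) = -ψ x := by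
  simp only [ψ, mul_neg, T_neg]

lemma abs_ψ_le_one (x : ℝ) : |ψ x| ≤ 1 := by
  have hπ : 3 < π := pi_gt_three
  rw [ψ, abs_mul, abs_of_pos (by positivity : 0 < 21 / (10 * π)), div_mul_eq_mul_div,
    div_le_one (by positivity)]
  nlinarith [abs_T_le (2 * π * x)]

lemma ψ_three_eighths_lt : ψ (3/8) < -(1/4) := by
  have hπ : π < 3.15 := pi_lt_d2
  have h := T_three_pi_div_four
  rw [ψ, show 2 * π * (3/8) = 3 * π / 4 by ring, div_mul_eq_mul_div,
    div_lt_iff₀ (by positivity)]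
  nlinarith

lemma one_add_ψ'_pos (x : ℝ) : 0 < 1 + ψ' x := by
  have : 0 ≤ ((1 - cos (2 * π * x)) / 2) ^ 6 := by positivity
  simp only [ψ']
  linarith

lemma surjective_of_abs_sub_le {g : ℝ → ℝ} (hg : Continuous g) {r : ℝ} (h : ∀ x, |g x - x| ≤ r) :
    Function.Surjective g := by
  intro y
  have hlo : g (y - r) ≤ y := by linarith [(abs_le.1 (h (y - r))).2]
  have hhi : y ≤ g (y + r) := by linarith [(abs_le.1 (h (y + r))).1]
  have hr : y - r ≤ y + r := by linarith [(abs_nonneg _).trans (h 0)]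
  obtain ⟨x, -, hx⟩ := intermediate_value_Icc hr hg.continuousOn ⟨hlo, hhi⟩
  exact ⟨x, hx⟩

def eighthNbhd (c : ℝ) : Set ℝ := ⋃ n : ℤ, Ioo (n + c - 1/8) (n + c + 1/8)

lemma mem_eighthNbhd {c x : ℝ} : x ∈ eighthNbhd c ↔ ∃ n : ℤ, n + c - 1/8 < x ∧ x < n + c + 1/8 := by
  simp only [eighthNbhd, mem_iUnion, mem_Ioo]

lemma disjoint_eighthNbhd {c₁ c₂ : ℝ} (j : ℤ) (hj : ¬ (4 : ℤ) ∣ j) (h : c₂ - c₁ = j / 4) :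
    Disjoint (eighthNbhd c₁) (eighthNbhd c₂) := by
  refine Set.disjoint_left.2 fun x hx₁ hx₂ => ?_
  obtain ⟨n, hn₁, hn₂⟩ := mem_eighthNbhd.1 hx₁
  obtain ⟨m, hm₁, hm₂⟩ := mem_eighthNbhd.1 hx₂
  have hlo : ((j - 1 : ℤ) : ℝ) < ((4 * (n - m) : ℤ) : ℝ) := by push_cast; linarith
  have hhi : ((4 * (n - m) : ℤ) : ℝ) < ((j + 1 : ℤ) : ℝ) := by push_cast; linarith
  have := Int.cast_lt.1 hlo
  have := Int.cast_lt.1 hhi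
  omega

lemma mapsTo_compl_eighthNbhd {g : ℝ → ℝ} (hg : Monotone g)
    (hg_add : ∀ x (n : ℤ), g (x + n) = g x + n) (hlo : -(1/8) < g (-(3/8))) (hhi : g (3/8) < 1/8)
    (c : ℝ) : MapsTo (fun x => g (x - c) + c) (eighthNbhd (c + 1/2))ᶜ (eighthNbhd c) := by
  intro x hx
  set m := round (x - c)
  have hu := abs_le.1 (abs_sub_round (x - c))
  have hu₁ : -(3/8) ≤ x - c - m := by
    by_contra! h
    exact hx (mem_eighthNbhd.2 ⟨m - 1, by push_cast; constructor <;> linarith⟩)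
  have hu₂ : x - c - m ≤ 3/8 := by
    by_contra! h
    exact hx (mem_eighthNbhd.2 ⟨m, by constructor <;> linarith⟩)
  have hgx : g (x - c) = g (x - c - m) + m := by rw [← hg_add, sub_add_cancel]
  refine mem_eighthNbhd.2 ⟨m, ?_, ?_⟩
  · linarith [hg hu₁]
  · linarith [hg hu₂]

def f (c x : ℝ) : ℝ := x + ψ (x - c)

lemma hasDerivAt_f (c x : ℝ) : HasDerivAt (f c) (1 + ψ' (x - c)) x :=
  (hasDerivAt_id x).add ((hasDerivAt_ψ (x - c)).comp_sub_const x c)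

lemma contDiff_f {n : WithTop ℕ∞} (c : ℝ) : ContDiff ℝ n (f c) :=
  contDiff_id.add (contDiff_ψ.comp (contDiff_id.sub contDiff_const))

lemma strictMono_f (c : ℝ) : StrictMono (f c) :=
  strictMono_of_hasDerivAt_pos (hasDerivAt_f c) fun x => one_add_ψ'_pos (x - c)

lemma abs_f_sub_le_one (c x : ℝ) : |f c x - x| ≤ 1 := by
  simpa only [f, add_sub_cancel_left] using abs_ψ_le_one (x - c)

lemma f_add_int (x : ℝ) (n : ℤ) : f 0 (x + n) = f 0 x + n := by
  have h := ψ_periodic.int_mul n x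
  rw [mul_one] at h
  simp only [f, sub_zero, h]
  ring

lemma f_eq_f_zero (c x : ℝ) : f c x = f 0 (x - c) + c := by
  simp only [f, sub_zero]; ring

lemma mapsTo_f (c : ℝ) : MapsTo (f c) (eighthNbhd (c + 1/2))ᶜ (eighthNbhd c) := by
  have hψ := ψ_three_eighths_lt
  have hlo : -(1/8) < f 0 (-(3/8)) := by simp only [f, sub_zero, ψ_neg]; linarith
  have hhi : f 0 (3/8) < 1/8 := by simp only [f, sub_zero]; linarith
  simpa only [← f_eq_f_zero] using
    mapsTo_compl_eighthNbhd (strictMono_f 0).monotone f_add_int hlo hhi c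

def fIso (c : ℝ) : ℝ ≃o ℝ :=
  (strictMono_f c).orderIsoOfSurjective (f c)
    (surjective_of_abs_sub_le (contDiff_f c (n := 0)).continuous (abs_f_sub_le_one c))

lemma contDiff_fIso_symm {n : WithTop ℕ∞} (c : ℝ) : ContDiff ℝ n (fIso c).symm :=
  (fIso c).toHomeomorph.contDiff_symm_deriv (fun x => (one_add_ψ'_pos (x - c)).ne')
    (hasDerivAt_f c) (contDiff_f c)

lemma mapsTo_fIso_symm (c : ℝ) : MapsTo (fIso c).symm (eighthNbhd c)ᶜ (eighthNbhd (c + 1/2)) := by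
  intro x hx
  by_contra h
  exact hx ((fIso c).apply_symm_apply x ▸ mapsTo_f c h)

def expConj (e : ℝ ≃o ℝ) : Equiv.Perm (Ioi (0 : ℝ)) :=
  expOrderIso.toEquiv.permCongr e.toEquiv

section expConj

variable (e : ℝ ≃o ℝ)

lemma coe_expConj_apply (t : Ioi (0 : ℝ)) : (expConj e t : ℝ) = exp (e (log t)) := by
  rw [log_of_pos t.2]
  rfl

lemma expConj_inv : (expConj e)⁻¹ = expConj e.symm := rfl

lemma log_expConj_apply (t : Ioi (0 : ℝ)) : log (expConj e t) = e (log t) := by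
  rw [coe_expConj_apply, log_exp]

lemma strictMono_expConj : StrictMono fun t => (expConj e t : ℝ) := by
  intro s t hst
  simp only [coe_expConj_apply]
  exact exp_lt_exp.2 (e.strictMono (log_lt_log s.2 hst))

lemma expConj_bounds {r : ℝ} (he : ∀ x, |e x - x| ≤ r) (t : Ioi (0 : ℝ)) :
    exp (-r) * t ≤ expConj e t ∧ (expConj e t : ℝ) ≤ exp r * t := by
  have h := abs_le.1 (he (log t))
  rw [coe_expConj_apply]
  constructor
  · calc exp (-r) * t = exp (-r + log t) := by rw [exp_add, exp_log t.2]
      _ ≤ exp (e (log t)) := exp_le_exp.2 (by linarith)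
  · calc exp (e (log t)) ≤ exp (r + log t) := exp_le_exp.2 (by linarith)
      _ = exp r * t := by rw [exp_add, exp_log t.2]

lemma exists_contDiffOn_eq_expConj {n : WithTop ℕ∞} (he : ContDiff ℝ n e) :
    ∃ A : ℝ → ℝ, ContDiffOn ℝ n A (Ioi 0) ∧ ∀ t : Ioi (0 : ℝ), A t = expConj e t := by
  refine ⟨fun t => exp (e (log t)), ?_, fun t => (coe_expConj_apply e t).symm⟩
  exact (contDiff_exp.comp he).comp_contDiffOn
    (contDiffOn_log.mono fun t (ht : 0 < t) => ht.ne')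

end expConj

lemma mapsTo_expConj {e : ℝ ≃o ℝ} {s t : Set ℝ} (h : MapsTo e s t) :
    MapsTo (expConj e) ((fun x : Ioi (0 : ℝ) => log x) ⁻¹' s) ((fun x => log x) ⁻¹' t) :=
  fun x hx => by simpa only [mem_preimage, log_expConj_apply] using h hx

lemma injective_lift_expConj_fIso {c₀ c₁ : ℝ} (hc : c₁ - c₀ = 1/4) :
    Function.Injective
      (FreeGroup.lift (fun i => if i then expConj (fIso c₀) else expConj (fIso c₁)) :
        FreeGroup Bool →* Equiv.Perm (Ioi (0 : ℝ))) := by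
  set L : Ioi (0 : ℝ) → ℝ := fun x => log x
  have hdisj (a b : ℝ) (k : ℤ) (hk : ¬ (4 : ℤ) ∣ k) (h : b - a = k / 4) :
      Disjoint (L ⁻¹' eighthNbhd a) (L ⁻¹' eighthNbhd b) :=
    (disjoint_eighthNbhd k hk h).preimage L
  refine FreeGroup.injective_lift_of_ping_pong _ (fun i => L ⁻¹' eighthNbhd (if i then c₀ else c₁))
    (fun i => L ⁻¹' eighthNbhd ((if i then c₀ else c₁) + 1/2)) (fun i => ?_) ?_ ?_ ?_ ?_ ?_
  · refine ⟨expOrderIso (if i then c₀ else c₁), ?_⟩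
    simp only [L, mem_preimage, coe_expOrderIso_apply, log_exp]
    exact mem_eighthNbhd.2 ⟨0, by norm_num⟩
  · rintro (_ | _) (_ | _) hij <;> simp only [Function.onFun, ↓reduceIte, Bool.false_eq_true]
    exacts [absurd rfl hij, hdisj _ _ (-1) (by decide) (by push_cast; linarith),
      hdisj _ _ 1 (by decide) (by push_cast; linarith), absurd rfl hij]
  · rintro (_ | _) (_ | _) hij <;> simp only [Function.onFun, ↓reduceIte, Bool.false_eq_true]
    exacts [absurd rfl hij, hdisj _ _ (-1) (by decide) (by push_cast; linarith),
      hdisj _ _ 1 (by decide) (by push_cast; linarith), absurd rfl hij]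
  · rintro (_ | _) (_ | _) <;> simp only [↓reduceIte, Bool.false_eq_true]
    exacts [hdisj _ _ 2 (by decide) (by push_cast; linarith),
      hdisj _ _ 1 (by decide) (by push_cast; linarith),
      hdisj _ _ 3 (by decide) (by push_cast; linarith),
      hdisj _ _ 2 (by decide) (by push_cast; linarith)]
  · rintro (_ | _)
    all_goals rw [Set.smul_set_subset_iff, ← preimage_compl]
    exacts [mapsTo_expConj (mapsTo_f c₁), mapsTo_expConj (mapsTo_f c₀)]
  · rintro (_ | _)
    all_goals rw [Set.smul_set_subset_iff, ← preimage_compl]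
    exacts [mapsTo_expConj (mapsTo_fIso_symm c₁), mapsTo_expConj (mapsTo_fIso_symm c₀)]

end

end HalflineFreeGroup

open HalflineFreeGroup

/-- there exist C^∞ diffeomorphisms a, b of (0,∞) and constants
0 < C ≤ C' with C·t ≤ a(t), b(t) ≤ C'·t, generating a nonabelian free group of
bijections of (0,∞). -/
theorem stmt3 :
    ∃ (a b : Equiv.Perm ↥(Set.Ioi (0 : ℝ))) (C C' : ℝ),
      0 < C ∧ C ≤ C' ∧
      -- a and b are strictly increasing
      StrictMono (fun x : ↥(Set.Ioi (0 : ℝ)) => (a x : ℝ)) ∧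
      StrictMono (fun x : ↥(Set.Ioi (0 : ℝ)) => (b x : ℝ)) ∧
      -- a, a⁻¹, b, b⁻¹ are smooth (restrictions to (0,∞) of smooth functions)
      (∀ e ∈ ({a, a⁻¹, b, b⁻¹} : Set (Equiv.Perm ↥(Set.Ioi (0 : ℝ)))),
        ∃ A : ℝ → ℝ, ContDiffOn ℝ (⊤ : ℕ∞) A (Set.Ioi 0) ∧
          ∀ x : ↥(Set.Ioi (0 : ℝ)), A (x : ℝ) = (e x : ℝ)) ∧
      -- tameness bounds
      (∀ x : ↥(Set.Ioi (0 : ℝ)),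
        C * (x : ℝ) ≤ (a x : ℝ) ∧ (a x : ℝ) ≤ C' * (x : ℝ) ∧
        C * (x : ℝ) ≤ (b x : ℝ) ∧ (b x : ℝ) ≤ C' * (x : ℝ)) ∧
      -- a and b generate a free group of rank two
      Function.Injective
        (FreeGroup.lift (fun i : Bool => if i then a else b) :
          FreeGroup Bool →* Equiv.Perm ↥(Set.Ioi (0 : ℝ))) := by
  have hbounds (c : ℝ) := expConj_bounds (fIso c) (abs_f_sub_le_one c)
  refine ⟨expConj (fIso 0), expConj (fIso (1/4)), exp (-1), exp 1, exp_pos _,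
    exp_le_exp.2 (by norm_num), strictMono_expConj _, strictMono_expConj _, ?_, fun x => ?_,
    injective_lift_expConj_fIso (by norm_num)⟩
  · simp only [mem_insert_iff, mem_singleton_iff, expConj_inv]
    rintro e (rfl | rfl | rfl | rfl)
    exacts [exists_contDiffOn_eq_expConj _ (contDiff_f 0),
      exists_contDiffOn_eq_expConj _ (contDiff_fIso_symm 0),
      exists_contDiffOn_eq_expConj _ (contDiff_f (1/4)),
      exists_contDiffOn_eq_expConj _ (contDiff_fIso_symm (1/4))]
  · exact ⟨(hbounds 0 x).1, (hbounds 0 x).2, (hbounds (1/4) x).1, (hbounds (1/4) x).2⟩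
end

section
/- Let α, β be strictly increasing bijections of ℝ such that |α(t)| < |t| for every t ≠ 0, and β(t) = t for every t outside some compact subset of the interval (−1, 0]. Let t₀ ∈ (−1,1), let n ≥ 1, let γ₁, …, γₙ ∈ {α, α⁻¹, β, β⁻¹}, and set t_i := γ_i(t_{i−1}) for 1 ≤ i ≤ n. Suppose t_n ∈ (−1,1) but t_i ∉ (−1,1) for some index i. Then there exist m < n and δ₁, …, δ_m ∈ {α, α⁻¹, β, β⁻¹} such that the composition δ_m ∘ ⋯ ∘ δ₁ coincides with γₙ ∘ ⋯ ∘ γ₁ on some open neighborhood of t₀ (i.e., the two compositions have the same germ at t₀, and moreover all the intermediate points of the shorter composition starting from t₀ can be taken in (−1,1)). In particular, any decomposition of minimal length of a germ of an element of ⟨α,β⟩ at a point of (−1,1), with image in (−1,1), has all its intermediate points in (−1,1). -/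
/-!
The maps β^{±1} fix every point off a closed set K ⊆ (−1, 1), hence preserve (−1, 1). Look at a
point of the orbit t₀, …, tₙ farthest from 0; it lies outside (−1, 1). If the letter entering or
leaving it is β^{±1}, that letter is the identity near the point where it is applied, so deleting
it does not change the germ at t₀. Otherwise, as α strictly decreases |t| for t ≠ 0, the farthest
point is entered by α⁻¹ and left by α, and this pair cancels. Hence a shortest word with the same
germ at t₀ has its whole orbit inside (−1, 1), and it is shorter than the given one.
-/

open Set Filter Topology

section Words

variable {G : Type*} [Monoid G]

def wordProd (γ : ℕ → G) (n : ℕ) : G := ((List.range n).map γ).reverse.prod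

@[simp] lemma wordProd_zero (γ : ℕ → G) : wordProd γ 0 = 1 := rfl

lemma wordProd_succ (γ : ℕ → G) (n : ℕ) : wordProd γ (n + 1) = γ n * wordProd γ n := by
  simp [wordProd, List.range_succ]

lemma wordProd_add (γ : ℕ → G) (k m : ℕ) :
    wordProd γ (k + m) = wordProd (fun i => γ (k + i)) m * wordProd γ k := by
  induction m with
  | zero => simp
  | succ m ih => rw [← add_assoc, wordProd_succ, ih, wordProd_succ, mul_assoc]

lemma wordProd_congr {γ γ' : ℕ → G} {n : ℕ} (h : ∀ i < n, γ i = γ' i) :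
    wordProd γ n = wordProd γ' n := by
  unfold wordProd
  rw [List.map_congr_left fun i hi => h i (List.mem_range.1 hi)]

def eraseBlock {α : Type*} (γ : ℕ → α) (k d : ℕ) : ℕ → α :=
  fun j => if j < k then γ j else γ (j + d)

lemma eraseBlock_mem {α : Type*} {S : Set α} {γ : ℕ → α} {n : ℕ} (hγ : ∀ i < n, γ i ∈ S)
    (k d : ℕ) : ∀ j < n - d, eraseBlock γ k d j ∈ S := by
  intro j hj
  unfold eraseBlock
  split_ifs <;> apply hγ <;> omega

lemma wordProd_eraseBlock_add (γ : ℕ → G) (k d m : ℕ) :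
    wordProd (eraseBlock γ k d) (k + m) = wordProd (fun i => γ (k + d + i)) m * wordProd γ k := by
  rw [wordProd_add]
  congr 1
  · congr 1
    funext i
    simp [eraseBlock, add_right_comm]
  · exact wordProd_congr fun i hi => if_pos hi

end Words

lemma Equiv.Perm.wordProd_eraseBlock_apply {X : Type*} {γ : ℕ → Equiv.Perm X} {k d n : ℕ}
    (hkd : k + d ≤ n) {x : X} (h : wordProd γ (k + d) x = wordProd γ k x) :
    wordProd (eraseBlock γ k d) (n - d) x = wordProd γ n x := by
  obtain ⟨m, rfl⟩ := Nat.exists_eq_add_of_le hkd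
  rw [show k + d + m - d = k + m by omega, wordProd_eraseBlock_add, wordProd_add,
    Equiv.Perm.mul_apply, Equiv.Perm.mul_apply, h]

lemma continuous_wordProd {X : Type*} [TopologicalSpace X] {γ : ℕ → Equiv.Perm X} {n : ℕ}
    (h : ∀ i < n, Continuous (γ i)) : Continuous ⇑(wordProd γ n) := by
  induction n with
  | zero => exact continuous_id
  | succ n ih =>
    rw [wordProd_succ, Equiv.Perm.coe_mul]
    exact (h n n.lt_succ_self).comp (ih fun i hi => h i (by omega))

lemma eventuallyEq_wordProd_eraseBlock_one {X : Type*} [TopologicalSpace X]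
    {γ : ℕ → Equiv.Perm X} {k n : ℕ} (hk : k < n) {x : X}
    (hcont : ContinuousAt ⇑(wordProd γ k) x) (hfix : ∀ᶠ y in 𝓝 (wordProd γ k x), γ k y = y) :
    ⇑(wordProd (eraseBlock γ k 1) (n - 1)) =ᶠ[𝓝 x] ⇑(wordProd γ n) := by
  filter_upwards [hcont.eventually hfix] with y hy
  exact Equiv.Perm.wordProd_eraseBlock_apply hk (by rwa [wordProd_succ])

lemma Equiv.Perm.continuous_of_strictMono {σ : Equiv.Perm ℝ} (hσ : StrictMono σ) :
    Continuous σ :=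
  hσ.monotone.continuous_of_surjective σ.surjective

lemma Equiv.Perm.strictMono_inv {α : Type*} [LinearOrder α] {σ : Equiv.Perm α}
    (hσ : StrictMono σ) : StrictMono ⇑σ⁻¹ :=
  fun a b hab => hσ.lt_iff_lt.1 (by simpa using hab)

lemma Equiv.Perm.mapsTo_of_fixes_compl {X : Type*} {σ : Equiv.Perm X} {K I : Set X}
    (hKI : K ⊆ I) (hfix : ∀ s ∉ K, σ s = s) : MapsTo σ I I := by
  intro s hs
  by_contra hout
  have hσs : σ (σ s) = σ s := hfix _ fun h => hout (hKI h)
  rw [σ.injective hσs] at hout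
  exact hout hs

lemma map_zero_of_strictMono_of_abs_lt {f : ℝ → ℝ} (hf : StrictMono f)
    (hcontr : ∀ t, t ≠ 0 → |f t| < |t|) : f 0 = 0 := by
  by_contra h
  have hlt := hcontr (f 0) h
  rcases Ne.lt_or_gt h with hneg | hpos
  · have : f (f 0) < f 0 := hf hneg
    rw [abs_of_neg hneg, abs_of_neg (this.trans hneg)] at hlt
    linarith
  · have : f 0 < f (f 0) := hf hpos
    rw [abs_of_pos hpos, abs_of_pos (hpos.trans this)] at hlt
    linarith

lemma abs_apply_lt_abs_of_apply_ne_zero {f : ℝ → ℝ} (hf : StrictMono f)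
    (hcontr : ∀ t, t ≠ 0 → |f t| < |t|) {s : ℝ} (hs : f s ≠ 0) : |f s| < |s| :=
  hcontr s fun h => hs (h ▸ map_zero_of_strictMono_of_abs_lt hf hcontr)

lemma continuous_of_mem_generators {α β σ : Equiv.Perm ℝ} (hα : StrictMono α) (hβ : StrictMono β)
    (hσ : σ ∈ ({α, α⁻¹, β, β⁻¹} : Set (Equiv.Perm ℝ))) : Continuous σ := by
  rcases hσ with rfl | rfl | rfl | rfl
  exacts [Equiv.Perm.continuous_of_strictMono hα,
    Equiv.Perm.continuous_of_strictMono (Equiv.Perm.strictMono_inv hα),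
    Equiv.Perm.continuous_of_strictMono hβ,
    Equiv.Perm.continuous_of_strictMono (Equiv.Perm.strictMono_inv hβ)]

lemma eventuallyEq_wordProd_eraseBlock_of_fixes_compl {α β : Equiv.Perm ℝ} (hα : StrictMono α)
    (hβ : StrictMono β) {K : Set ℝ} (hK : IsClosed K) (hfix : ∀ t ∉ K, β t = t) {t₀ : ℝ}
    {n i : ℕ} {γ : ℕ → Equiv.Perm ℝ}
    (hγ : ∀ i < n, γ i ∈ ({α, α⁻¹, β, β⁻¹} : Set (Equiv.Perm ℝ))) (hi : i < n)
    (hβi : γ i = β ∨ γ i = β⁻¹) (hxi : wordProd γ i t₀ ∉ K) :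
    ⇑(wordProd (eraseBlock γ i 1) (n - 1)) =ᶠ[𝓝 t₀] ⇑(wordProd γ n) := by
  have hcont : Continuous ⇑(wordProd γ i) :=
    continuous_wordProd fun j hj => continuous_of_mem_generators hα hβ (hγ j (by omega))
  refine eventuallyEq_wordProd_eraseBlock_one hi hcont.continuousAt ?_
  filter_upwards [hK.isOpen_compl.mem_nhds hxi] with y hy
  rcases hβi with h | h <;> rw [h]
  exacts [hfix y hy, Function.IsFixedPt.perm_inv (hfix y hy)]

lemma exists_alpha_inv_alpha_of_forall_beta_mem {α β : Equiv.Perm ℝ} (hα : StrictMono α)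
    (hcontr : ∀ t : ℝ, t ≠ 0 → |α t| < |t|) {K : Set ℝ} (hKI : K ⊆ Ioo (-1) 1)
    (hfix : ∀ t ∉ K, β t = t) {t₀ : ℝ} (ht₀ : t₀ ∈ Ioo (-1 : ℝ) 1)
    {n : ℕ} {γ : ℕ → Equiv.Perm ℝ}
    (hγ : ∀ i < n, γ i ∈ ({α, α⁻¹, β, β⁻¹} : Set (Equiv.Perm ℝ)))
    (htn : wordProd γ n t₀ ∈ Ioo (-1 : ℝ) 1) (hout : ∃ i ≤ n, wordProd γ i t₀ ∉ Ioo (-1 : ℝ) 1)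
    (hβ_mem : ∀ i < n, γ i = β ∨ γ i = β⁻¹ → wordProd γ i t₀ ∈ K) :
    ∃ k, k + 1 < n ∧ γ k = α⁻¹ ∧ γ (k + 1) = α := by
  set x : ℕ → ℝ := fun i => wordProd γ i t₀ with hx
  have hx_succ : ∀ i, x (i + 1) = γ i (x i) := fun i => by simp [hx, wordProd_succ]
  have hletter : ∀ i < n, γ i = α ∨ γ i = α⁻¹ ∨ γ i = β ∨ γ i = β⁻¹ := fun i hi => by
    simpa only [mem_insert_iff, mem_singleton_iff] using hγ i hi
  obtain ⟨p, hp, hp_max⟩ :=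
    (Finset.range (n + 1)).exists_max_image (fun i => |x i|) ⟨0, Finset.mem_range.2 n.succ_pos⟩
  have hmax : ∀ i ≤ n, |x i| ≤ |x p| := fun i hi => hp_max i (Finset.mem_range_succ_iff.2 hi)
  have hp_out : x p ∉ Ioo (-1 : ℝ) 1 := by
    obtain ⟨i, hi, hxi⟩ := hout
    rw [mem_Ioo, ← abs_lt, not_lt] at hxi ⊢
    exact hxi.trans (hmax i hi)
  have hp_ne : x p ≠ 0 := fun h => hp_out (by simp [h])
  obtain ⟨k, rfl⟩ : ∃ k, p = k + 1 :=
    Nat.exists_eq_succ_of_ne_zero (by rintro rfl; exact hp_out ht₀)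
  have hkn : k + 1 < n :=
    lt_of_le_of_ne (Finset.mem_range_succ_iff.1 hp) (by rintro rfl; exact hp_out htn)
  refine ⟨k, hkn, ?_, ?_⟩
  · rcases hletter k (by omega) with h | h | h | h
    · rw [hx_succ, h] at hmax hp_ne
      exact absurd (hmax k (by omega))
        (not_le.2 (abs_apply_lt_abs_of_apply_ne_zero hα hcontr hp_ne))
    · exact h
    all_goals
      refine absurd ?_ hp_out
      rw [hx_succ, h]
    · exact Equiv.Perm.mapsTo_of_fixes_compl hKI hfix (hKI (hβ_mem k (by omega) (by simp [h])))
    · exact Equiv.Perm.mapsTo_of_fixes_compl hKI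
        (fun t ht => Function.IsFixedPt.perm_inv (hfix t ht))
        (hKI (hβ_mem k (by omega) (by simp [h])))
  · rcases hletter (k + 1) hkn with h | h | h | h
    · exact h
    · have hα_next : α (x (k + 2)) = x (k + 1) := by simp [hx_succ (k + 1), h]
      have := abs_apply_lt_abs_of_apply_ne_zero hα hcontr (hα_next ▸ hp_ne)
      exact absurd (hmax (k + 2) hkn) (not_le.2 (hα_next ▸ this))
    all_goals exact absurd (hKI (hβ_mem (k + 1) hkn (by simp [h]))) hp_out

theorem exists_shorter_word_eventuallyEq {α β : Equiv.Perm ℝ} (hα : StrictMono α)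
    (hβ : StrictMono β) (hcontr : ∀ t : ℝ, t ≠ 0 → |α t| < |t|) {K : Set ℝ} (hK : IsClosed K)
    (hKI : K ⊆ Ioo (-1) 1) (hfix : ∀ t ∉ K, β t = t) {t₀ : ℝ} (ht₀ : t₀ ∈ Ioo (-1 : ℝ) 1)
    {n : ℕ} {γ : ℕ → Equiv.Perm ℝ}
    (hγ : ∀ i < n, γ i ∈ ({α, α⁻¹, β, β⁻¹} : Set (Equiv.Perm ℝ)))
    (htn : wordProd γ n t₀ ∈ Ioo (-1 : ℝ) 1) (hout : ∃ i ≤ n, wordProd γ i t₀ ∉ Ioo (-1 : ℝ) 1) :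
    ∃ m < n, ∃ δ : ℕ → Equiv.Perm ℝ,
      (∀ j < m, δ j ∈ ({α, α⁻¹, β, β⁻¹} : Set (Equiv.Perm ℝ))) ∧
      ⇑(wordProd δ m) =ᶠ[𝓝 t₀] ⇑(wordProd γ n) := by
  by_cases hβ_off : ∃ i < n, (γ i = β ∨ γ i = β⁻¹) ∧ wordProd γ i t₀ ∉ K
  · obtain ⟨i, hi, hβi, hxi⟩ := hβ_off
    exact ⟨n - 1, by omega, eraseBlock γ i 1, eraseBlock_mem hγ i 1,
      eventuallyEq_wordProd_eraseBlock_of_fixes_compl hα hβ hK hfix hγ hi hβi hxi⟩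
  push Not at hβ_off
  obtain ⟨k, hkn, hk, hk_succ⟩ :=
    exists_alpha_inv_alpha_of_forall_beta_mem hα hcontr hKI hfix ht₀ hγ htn hout hβ_off
  refine ⟨n - 2, by omega, eraseBlock γ k 2, eraseBlock_mem hγ k 2,
    Eventually.of_forall fun y => Equiv.Perm.wordProd_eraseBlock_apply (by omega) ?_⟩
  simp [wordProd_succ, hk, hk_succ]

theorem exists_shorter_word_eventuallyEq_inside {α β : Equiv.Perm ℝ} (hα : StrictMono α)
    (hβ : StrictMono β) (hcontr : ∀ t : ℝ, t ≠ 0 → |α t| < |t|) {K : Set ℝ} (hK : IsClosed K)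
    (hKI : K ⊆ Ioo (-1) 1) (hfix : ∀ t ∉ K, β t = t) {t₀ : ℝ} (ht₀ : t₀ ∈ Ioo (-1 : ℝ) 1)
    {n : ℕ} {γ : ℕ → Equiv.Perm ℝ}
    (hγ : ∀ i < n, γ i ∈ ({α, α⁻¹, β, β⁻¹} : Set (Equiv.Perm ℝ)))
    (htn : wordProd γ n t₀ ∈ Ioo (-1 : ℝ) 1) (hout : ∃ i ≤ n, wordProd γ i t₀ ∉ Ioo (-1 : ℝ) 1) :
    ∃ m < n, ∃ δ : ℕ → Equiv.Perm ℝ,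
      (∀ j < m, δ j ∈ ({α, α⁻¹, β, β⁻¹} : Set (Equiv.Perm ℝ))) ∧
      (∀ j ≤ m, wordProd δ j t₀ ∈ Ioo (-1 : ℝ) 1) ∧
      ⇑(wordProd δ m) =ᶠ[𝓝 t₀] ⇑(wordProd γ n) := by
  classical
  obtain ⟨m, hm, δ, hδ, hgerm⟩ :=
    exists_shorter_word_eventuallyEq hα hβ hcontr hK hKI hfix ht₀ hγ htn hout
  have hex : ∃ m, ∃ δ : ℕ → Equiv.Perm ℝ,
      (∀ j < m, δ j ∈ ({α, α⁻¹, β, β⁻¹} : Set (Equiv.Perm ℝ))) ∧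
      ⇑(wordProd δ m) =ᶠ[𝓝 t₀] ⇑(wordProd γ n) := ⟨m, δ, hδ, hgerm⟩
  obtain ⟨δ₀, hδ₀, hgerm₀⟩ := Nat.find_spec hex
  refine ⟨Nat.find hex, (Nat.find_min' hex ⟨δ, hδ, hgerm⟩).trans_lt hm, δ₀, hδ₀, ?_, hgerm₀⟩
  by_contra! hδ₀_out
  obtain ⟨m', hm', δ', hδ', hgerm'⟩ := exists_shorter_word_eventuallyEq hα hβ hcontr hK hKI
    hfix ht₀ hδ₀ (hgerm₀.eq_of_nhds ▸ htn) hδ₀_out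
  exact Nat.find_min hex hm' ⟨δ', hδ', hgerm'.trans hgerm₀⟩

theorem stmt5_general (α β : Equiv.Perm ℝ) (hα : StrictMono ⇑α) (hβ : StrictMono ⇑β)
    (hcontr : ∀ t : ℝ, t ≠ 0 → |α t| < |t|)
    (hsupp : ∃ K : Set ℝ, IsCompact K ∧ K ⊆ Set.Ioc (-1) 0 ∧ ∀ t ∉ K, β t = t)
    (t₀ : ℝ) (ht₀ : t₀ ∈ Set.Ioo (-1 : ℝ) 1)
    (n : ℕ)
    (γ : ℕ → Equiv.Perm ℝ)
    (hγ : ∀ i < n, γ i ∈ ({α, α⁻¹, β, β⁻¹} : Set (Equiv.Perm ℝ)))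
    (t : ℕ → ℝ) (ht0 : t 0 = t₀) (hstep : ∀ i < n, t (i + 1) = γ i (t i))
    (htn : t n ∈ Set.Ioo (-1 : ℝ) 1)
    (hout : ∃ i ≤ n, t i ∉ Set.Ioo (-1 : ℝ) 1) :
    ∃ m : ℕ, m < n ∧
      ∃ (δ : ℕ → Equiv.Perm ℝ) (s : ℕ → ℝ),
        (∀ j < m, δ j ∈ ({α, α⁻¹, β, β⁻¹} : Set (Equiv.Perm ℝ))) ∧
        s 0 = t₀ ∧ (∀ j < m, s (j + 1) = δ j (s j)) ∧
        (∀ j ≤ m, s j ∈ Set.Ioo (-1 : ℝ) 1) ∧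
        ∃ U ∈ nhds t₀, Set.EqOn
          (⇑(((List.range m).map δ).reverse.prod))
          (⇑(((List.range n).map γ).reverse.prod)) U := by
  obtain ⟨K, hK, hKsub, hfix⟩ := hsupp
  have hKI : K ⊆ Ioo (-1) 1 := hKsub.trans (Ioc_subset_Ioo_right one_pos)
  have ht : ∀ i ≤ n, t i = wordProd γ i t₀ := by
    intro i
    induction i with
    | zero => simp [ht0]
    | succ i ih =>
      intro hi
      rw [hstep i (by omega), ih (by omega), wordProd_succ]
      rfl
  obtain ⟨i, hi, hti⟩ := hout
  obtain ⟨m, hm, δ, hδ, hinside, hgerm⟩ :=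
    exists_shorter_word_eventuallyEq_inside hα hβ hcontr hK.isClosed hKI hfix ht₀ hγ
      (ht n le_rfl ▸ htn) ⟨i, hi, ht i hi ▸ hti⟩
  obtain ⟨U, hU, heq⟩ := hgerm.exists_mem
  exact ⟨m, hm, δ, fun j => wordProd δ j t₀, hδ, rfl, fun j _ => by simp [wordProd_succ],
    hinside, U, hU, heq⟩

/-- minimal-length decompositions of germs at points of (−1,1) have all
intermediate points in (−1,1): if α is an increasing contraction of ℝ fixing 0, β an
increasing bijection supported in a compact subset of (−1,0], and a composition of n
letters from {α, α⁻¹, β, β⁻¹} sends t₀ ∈ (−1,1) to a point of (−1,1) with some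
intermediate point outside (−1,1), then there is a strictly shorter word with the same
germ at t₀ whose intermediate points starting from t₀ all lie in (−1,1). -/
theorem stmt5 (α β : Equiv.Perm ℝ) (hα : StrictMono ⇑α) (hβ : StrictMono ⇑β)
    (hcontr : ∀ t : ℝ, t ≠ 0 → |α t| < |t|)
    (hsupp : ∃ K : Set ℝ, IsCompact K ∧ K ⊆ Set.Ioc (-1) 0 ∧ ∀ t ∉ K, β t = t)
    (t₀ : ℝ) (ht₀ : t₀ ∈ Set.Ioo (-1 : ℝ) 1)
    (n : ℕ) (hn : 1 ≤ n)
    (γ : ℕ → Equiv.Perm ℝ)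
    (hγ : ∀ i < n, γ i ∈ ({α, α⁻¹, β, β⁻¹} : Set (Equiv.Perm ℝ)))
    (t : ℕ → ℝ) (ht0 : t 0 = t₀) (hstep : ∀ i < n, t (i + 1) = γ i (t i))
    (htn : t n ∈ Set.Ioo (-1 : ℝ) 1)
    (hout : ∃ i ≤ n, t i ∉ Set.Ioo (-1 : ℝ) 1) :
    ∃ m : ℕ, m < n ∧
      ∃ (δ : ℕ → Equiv.Perm ℝ) (s : ℕ → ℝ),
        (∀ j < m, δ j ∈ ({α, α⁻¹, β, β⁻¹} : Set (Equiv.Perm ℝ))) ∧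
        s 0 = t₀ ∧ (∀ j < m, s (j + 1) = δ j (s j)) ∧
        (∀ j ≤ m, s j ∈ Set.Ioo (-1 : ℝ) 1) ∧
        ∃ U ∈ nhds t₀, Set.EqOn
          (⇑(((List.range m).map δ).reverse.prod))
          (⇑(((List.range n).map γ).reverse.prod)) U :=
  stmt5_general α β hα hβ hcontr hsupp t₀ ht₀ n γ hγ t ht0 hstep htn hout
end

section
/- In the free group F on two generators a and b, let N denote the normal closure of the singleton {b} (the smallest normal subgroup containing b). Then: (1) N is not a finitely generated group; (2) N is nonabelian; and (3) the abelianization of N is not finitely generated (equivalently, ℚ ⊗ N_ab is a ℚ-vector space of infinite rank). -/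
/-!
Send `a = of true` to the shift `t` and `b = of false` to the basis vector `δ₀` of the wreath
product `ℤ ≀ ℤ = (ℤ →₀ ℤ) ⋊ ℤ`. The normal closure `N` of `b` lands in the base group, which is
abelian, and the conjugate `aⁿ b a⁻ⁿ` goes to `δₙ`; so `N`, and hence its abelianization, maps
onto the free abelian group `ℤ →₀ ℤ` of infinite rank. Finally `b` and `a b a⁻¹` do not commute,
as the two products are distinct reduced words.
-/

open SemidirectProduct
open FreeGroup (of)

theorem not_fg_multiplicative_finsupp_int (ι : Type*) [Infinite ι] :
    ¬ Group.FG (Multiplicative (ι →₀ ℤ)) := by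
  rw [← AddGroup.fg_iff_mul_fg, ← Module.Finite.iff_addGroup_fg]
  exact Module.not_finite_of_infinite_basis Finsupp.basisSingleOne

theorem MonoidHom.surjective_of_ofAdd_single_one_mem_range {H ι : Type*} [Group H]
    (ψ : H →* Multiplicative (ι →₀ ℤ))
    (h : ∀ i, Multiplicative.ofAdd (Finsupp.single i 1) ∈ ψ.range) : Function.Surjective ψ := by
  rw [← MonoidHom.range_eq_top, eq_top_iff]
  rintro a -
  induction a using Finsupp.induction_linear with
  | zero => exact ψ.range.one_mem
  | add f g hf hg => exact ψ.range.mul_mem hf hg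
  | single i c =>
    rw [show Finsupp.single i c = c • Finsupp.single i 1 by simp]
    exact ψ.range.zpow_mem (h i) c

theorem Abelianization.lift_surjective {G A : Type*} [Group G] [CommGroup A] {f : G →* A}
    (hf : Function.Surjective f) : Function.Surjective (lift f) := fun a ↦
  let ⟨x, hx⟩ := hf a
  ⟨Abelianization.of x, by rw [lift_apply_of, hx]⟩

theorem Subgroup.conj_mem_normalClosure_singleton {G : Type*} [Group G] (g h : G) :
    h * g * h⁻¹ ∈ normalClosure {g} :=
  (normalClosure_normal (s := {g})).conj_mem g (subset_normalClosure (Set.mem_singleton g)) h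

namespace SemidirectProduct

variable {N G H : Type*} [Group N] [Group G] [Group H] {φ : G →* MulAut N}

@[simps]
def leftHomOfRightEqOne (f : H →* N ⋊[φ] G) (hf : ∀ x, (f x).right = 1) : H →* N where
  toFun x := (f x).left
  map_one' := by simp
  map_mul' x y := by simp [hf]

end SemidirectProduct

noncomputable def shiftAut : Multiplicative ℤ →* MulAut (Multiplicative (ℤ →₀ ℤ)) where
  toFun n := AddEquiv.toMultiplicative (Finsupp.domCongr (Equiv.addLeft n.toAdd))
  map_one' := by ext; simp [Equiv.Perm.one_def]
  map_mul' m n := by ext; simp [Equiv.Perm.mul_def]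

theorem shiftAut_single (n m c : ℤ) :
    shiftAut (.ofAdd n) (.ofAdd (Finsupp.single m c)) = .ofAdd (Finsupp.single (n + m) c) := by
  simp [shiftAut]

notation "ℤ≀ℤ" => Multiplicative (ℤ →₀ ℤ) ⋊[shiftAut] Multiplicative ℤ

noncomputable def toWreath : FreeGroup Bool →* ℤ≀ℤ :=
  FreeGroup.lift fun
    | true => inr (.ofAdd 1)
    | false => inl (.ofAdd (Finsupp.single 0 1))

theorem right_toWreath_eq_one {x : FreeGroup Bool}
    (hx : x ∈ Subgroup.normalClosure {of false}) : (toWreath x).right = 1 := by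
  suffices Subgroup.normalClosure {of false} ≤ (rightHom.comp toWreath).ker from this hx
  refine Subgroup.normalClosure_le_normal ?_
  simp [toWreath]

theorem toWreath_conj_zpow (n : ℤ) :
    toWreath (of true ^ n * of false * (of true ^ n)⁻¹) = inl (.ofAdd (Finsupp.single n 1)) := by
  have ha : toWreath (of true ^ n) = inr (.ofAdd n) := by
    rw [map_zpow, show toWreath (of true) = inr (.ofAdd 1) from FreeGroup.lift_apply_of,
      ← map_zpow, ← ofAdd_zsmul, smul_eq_mul, mul_one]
  have hb : toWreath (of false) = inl (.ofAdd (Finsupp.single 0 1)) := FreeGroup.lift_apply_of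
  rw [map_mul, map_mul, map_inv, ha, hb, ← map_inv, ← inl_aut, shiftAut_single, add_zero]

noncomputable def baseHom : Subgroup.normalClosure {of false} →* Multiplicative (ℤ →₀ ℤ) :=
  leftHomOfRightEqOne (toWreath.comp (Subgroup.subtype _)) fun x ↦ right_toWreath_eq_one x.2

theorem baseHom_surjective : Function.Surjective baseHom :=
  baseHom.surjective_of_ofAdd_single_one_mem_range fun n ↦
    ⟨⟨_, Subgroup.conj_mem_normalClosure_singleton _ (of true ^ n)⟩,
      by simp [baseHom, toWreath_conj_zpow]⟩

theorem of_false_mul_conj_ne :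
    of false * (of true * of false * (of true)⁻¹) ≠ of true * of false * (of true)⁻¹ * of false := by
  decide

/-- in the free group on two generators, the normal closure N of one
generator is not finitely generated, is nonabelian, and has non–finitely generated
abelianization. -/
theorem stmt6 :
    ¬ Group.FG ↥(Subgroup.normalClosure ({FreeGroup.of false} : Set (FreeGroup Bool))) ∧
    (∃ x y : ↥(Subgroup.normalClosure ({FreeGroup.of false} : Set (FreeGroup Bool))),
      x * y ≠ y * x) ∧
    ¬ Group.FG
      (Abelianization
        ↥(Subgroup.normalClosure ({FreeGroup.of false} : Set (FreeGroup Bool)))) := by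
  have hA := not_fg_multiplicative_finsupp_int ℤ
  refine ⟨fun _ ↦ hA (Group.fg_of_surjective baseHom_surjective), ?_,
    fun _ ↦ hA (Group.fg_of_surjective (Abelianization.lift_surjective baseHom_surjective))⟩
  refine ⟨⟨_, Subgroup.subset_normalClosure (Set.mem_singleton _)⟩,
    ⟨_, Subgroup.conj_mem_normalClosure_singleton _ (of true)⟩, fun h ↦ ?_⟩
  exact of_false_mul_conj_ne (congrArg Subtype.val h)
end

section
/- Let X be a topological space, γ : X → X a homeomorphism, and F : X → ℝ a continuous proper function (the preimage of every compact subset of ℝ is compact) satisfying F(γ(x)) = F(x) + 1 for all x ∈ X. Then the orbit space of the ℤ-action generated by γ — the quotient of X by the equivalence relation x ∼ y ⟺ (∃ n ∈ ℤ, y = γ^n(x)) — is a compact topological space. -/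
/-!
Every orbit meets the compact set `F⁻¹[0, 1]`: since `F` shifts by `n` along `γ ^ n`, the point
`γ ^ (-⌊F x⌋) x` has `F`-value `fract (F x) ∈ [0, 1)`. The orbit space is therefore the image of
a compact set under the continuous quotient map.
-/

open Set

theorem Equiv.Perm.apply_zpow_apply_of_apply_eq_add_one {α R : Type*} [AddCommGroupWithOne R]
    {e : Equiv.Perm α} {F : α → R} (h : ∀ x, F (e x) = F x + 1) (n : ℤ) (x : α) :
    F ((e ^ n) x) = F x + n := by
  induction n using Int.induction_on generalizing x with
  | zero => simp
  | succ k ih =>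
    rw [zpow_add_one, Equiv.Perm.mul_apply, ih, h]
    push_cast; abel
  | pred k ih =>
    have h_inv : F (e⁻¹ x) = F x - 1 := by
      rw [eq_sub_iff_add_eq, ← h, Equiv.Perm.coe_inv, Equiv.apply_symm_apply]
    rw [zpow_sub_one, Equiv.Perm.mul_apply, ih, h_inv]
    push_cast; abel

theorem Equiv.Perm.apply_zpow_neg_floor_apply {α R : Type*} [CommRing R] [LinearOrder R]
    [FloorRing R] {e : Equiv.Perm α} {F : α → R} (h : ∀ x, F (e x) = F x + 1) (x : α) :
    F ((e ^ (-⌊F x⌋)) x) = Int.fract (F x) := by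
  rw [apply_zpow_apply_of_apply_eq_add_one h, Int.cast_neg, ← sub_eq_add_neg, Int.fract]

theorem Quot.compactSpace_of_isCompact_of_forall_exists_rel {X : Type*} [TopologicalSpace X]
    {r : X → X → Prop} {K : Set X} (hK : IsCompact K) (hcover : ∀ x, ∃ y ∈ K, r x y) :
    CompactSpace (Quot r) := by
  refine ⟨?_⟩
  convert hK.image (continuous_quot_mk (r := r))
  refine (eq_univ_of_forall fun q => ?_).symm
  obtain ⟨x, rfl⟩ := Quot.exists_rep q
  obtain ⟨y, hyK, hxy⟩ := hcover x
  exact ⟨y, hyK, (Quot.sound hxy).symm⟩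

theorem stmt8_general {X : Type*} [TopologicalSpace X] (γ : X ≃ₜ X) (F : X → ℝ)
    (hprop : ∀ K : Set ℝ, IsCompact K → IsCompact (F ⁻¹' K))
    (heq : ∀ x : X, F (γ x) = F x + 1) :
    CompactSpace (Quot fun x y : X => ∃ n : ℤ, y = (γ.toEquiv ^ n) x) := by
  refine Quot.compactSpace_of_isCompact_of_forall_exists_rel (hprop (Icc 0 1) isCompact_Icc)
    fun x => ?_
  have h_fract := Equiv.Perm.apply_zpow_neg_floor_apply (e := γ.toEquiv) heq x
  refine ⟨_, ?_, -⌊F x⌋, rfl⟩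
  rw [mem_preimage, h_fract]
  exact ⟨Int.fract_nonneg _, (Int.fract_lt_one _).le⟩

/-- if γ is a homeomorphism of X and F : X → ℝ is continuous, proper and
satisfies F(γ(x)) = F(x) + 1, then the orbit space of the ℤ-action generated by γ is
compact. -/
theorem stmt8 {X : Type*} [TopologicalSpace X] (γ : X ≃ₜ X) (F : X → ℝ)
    (hF : Continuous F)
    (hprop : ∀ K : Set ℝ, IsCompact K → IsCompact (F ⁻¹' K))
    (heq : ∀ x : X, F (γ x) = F x + 1) :
    CompactSpace (Quot fun x y : X => ∃ n : ℤ, y = (γ.toEquiv ^ n) x) :=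
  stmt8_general γ F hprop heq
end

section
/- Let X be a locally compact Hausdorff space and γ : X → X a homeomorphism such that the induced ℤ-action is properly discontinuous (for every compact K ⊆ X, the set { n ∈ ℤ : γ^n(K) ∩ K ≠ ∅ } is finite) and cocompact (there exists a compact K ⊆ X with ⋃_{n ∈ ℤ} γ^n(K) = X). Then there exists a continuous proper function F : X → ℝ (the preimage of every compact subset of ℝ is compact) satisfying F(γ(x)) = F(x) + 1 for all x ∈ X. -/
open Set

/-!
Take a compactly supported bump `φ ≥ 0` equal to `1` on a compact `K` whose translates cover `X`.
Proper discontinuity makes the translates `φ ∘ γⁿ` a locally finite family, so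
`S = ∑ φ ∘ γⁿ ≥ 1` and `T = ∑ (-n) • φ ∘ γⁿ` are continuous, and `F = T / S`, an average of the
`-n` with `γⁿ x ∈ supp φ`, satisfies `F ∘ γ = F + 1` because reindexing `n ↦ n + 1` turns `T ∘ γ`
into `T + S`. Any continuous `F` with `F ∘ γ = F + 1` is proper: `|F| ≤ M` on `K`, and
`x = γᵐ k` with `k ∈ K` forces `|F x - m| ≤ M`, so `F ⁻¹' [a, b]` lies in finitely many `γᵐ K`.
-/

section

variable {X : Type*} [TopologicalSpace X]

namespace Homeomorph

def toPermHom : (X ≃ₜ X) →* Equiv.Perm X where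
  toFun := toEquiv
  map_one' := rfl
  map_mul' _ _ := rfl

theorem continuous_toEquiv_zpow (γ : X ≃ₜ X) (n : ℤ) : Continuous ⇑(γ.toEquiv ^ n) := by
  rw [show γ.toEquiv ^ n = (γ ^ n).toEquiv from (map_zpow toPermHom γ n).symm]
  exact (γ ^ n).continuous

theorem toEquiv_zpow_apply_self (γ : X ≃ₜ X) (n : ℤ) (x : X) :
    (γ.toEquiv ^ n) (γ x) = (γ.toEquiv ^ (n + 1)) x := by
  rw [zpow_add_one]; rfl

end Homeomorph

variable {γ : X ≃ₜ X}

theorem apply_toEquiv_zpow_of_apply_eq_add_one {F : X → ℝ} (hF : ∀ x, F (γ x) = F x + 1) (n : ℤ)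
    (x : X) : F ((γ.toEquiv ^ n) x) = F x + n := by
  induction n using Int.induction_on generalizing x with
  | zero => simp
  | succ k ih =>
    rw [← γ.toEquiv_zpow_apply_self, ih, hF]
    push_cast; ring
  | pred k ih =>
    obtain ⟨y, rfl⟩ := γ.surjective x
    rw [γ.toEquiv_zpow_apply_self, sub_add_cancel, ih, hF]
    push_cast; ring

theorem isCompact_preimage_of_apply_eq_add_one {K : Set X} (hK : IsCompact K)
    (hcov : ⋃ n : ℤ, ⇑(γ.toEquiv ^ n) '' K = univ) {F : X → ℝ} (hFc : Continuous F)
    (hF : ∀ x, F (γ x) = F x + 1) {A : Set ℝ} (hA : IsCompact A) : IsCompact (F ⁻¹' A) := by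
  obtain ⟨M, hM⟩ := hK.exists_bound_of_continuousOn hFc.continuousOn
  obtain ⟨a, ha⟩ := hA.bddBelow
  obtain ⟨b, hb⟩ := hA.bddAbove
  have hsub : F ⁻¹' A ⊆ ⋃ m ∈ Icc ⌊a - M⌋ ⌈b + M⌉, ⇑(γ.toEquiv ^ m) '' K := by
    intro x hx
    obtain ⟨m, k, hk, rfl⟩ := mem_iUnion.1 (hcov ▸ mem_univ x)
    have hFx := apply_toEquiv_zpow_of_apply_eq_add_one hF m k
    have hFk := abs_le.1 (hM k hk)
    have hlo := ha hx
    have hhi := hb hx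
    simp only [hFx] at hlo hhi
    refine mem_biUnion ⟨Int.floor_le_iff.2 ?_, Int.le_ceil_iff.2 ?_⟩ (mem_image_of_mem _ hk) <;>
      linarith
  exact ((finite_Icc _ _).isCompact_biUnion fun m _ => hK.image (γ.continuous_toEquiv_zpow m))
    |>.of_isClosed_subset (hA.isClosed.preimage hFc) hsub

theorem finsum_comp_toEquiv_zpow_apply_self {M : Type*} [AddCommMonoid M] (f : X → M) (x : X) :
    ∑ᶠ n : ℤ, f ((γ.toEquiv ^ n) (γ x)) = ∑ᶠ n : ℤ, f ((γ.toEquiv ^ n) x) := by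
  simp only [γ.toEquiv_zpow_apply_self]
  exact finsum_comp_equiv (Equiv.addRight (1 : ℤ)) (f := fun n => f ((γ.toEquiv ^ n) x))

theorem finsum_neg_mul_comp_toEquiv_zpow_apply_self {f : X → ℝ} {x : X}
    (hfin : (Function.support fun n : ℤ => f ((γ.toEquiv ^ n) x)).Finite) :
    ∑ᶠ n : ℤ, -(n : ℝ) * f ((γ.toEquiv ^ n) (γ x)) =
      ∑ᶠ n : ℤ, -(n : ℝ) * f ((γ.toEquiv ^ n) x) + ∑ᶠ n : ℤ, f ((γ.toEquiv ^ n) x) := by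
  set g : ℤ → ℝ := fun n => f ((γ.toEquiv ^ n) x)
  calc ∑ᶠ n : ℤ, -(n : ℝ) * f ((γ.toEquiv ^ n) (γ x))
      = ∑ᶠ n : ℤ, -(((n + 1 : ℤ) : ℝ) - 1) * g (n + 1) := by
        simp only [γ.toEquiv_zpow_apply_self, Int.cast_add, Int.cast_one, add_sub_cancel_right, g]
    _ = ∑ᶠ n : ℤ, -((n : ℝ) - 1) * g n :=
        finsum_comp_equiv (Equiv.addRight (1 : ℤ)) (f := fun n => -((n : ℝ) - 1) * g n)
    _ = ∑ᶠ n : ℤ, (-(n : ℝ) * g n + g n) := by congr! 2; ring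
    _ = _ := finsum_add_distrib (hfin.subset (Function.support_mul_subset_right _ _)) hfin

theorem one_le_finsum_comp_toEquiv_zpow {K : Set X}
    (hcov : ⋃ n : ℤ, ⇑(γ.toEquiv ^ n) '' K = univ) {f : X → ℝ} (hf₀ : ∀ y, 0 ≤ f y)
    (hfK : EqOn f 1 K) {x : X}
    (hfin : (Function.support fun n : ℤ => f ((γ.toEquiv ^ n) x)).Finite) :
    1 ≤ ∑ᶠ n : ℤ, f ((γ.toEquiv ^ n) x) := by
  obtain ⟨m, k, hk, rfl⟩ := mem_iUnion.1 (hcov ▸ mem_univ x)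
  calc 1 = f ((γ.toEquiv ^ (-m)) ((γ.toEquiv ^ m) k)) := by
        rw [zpow_neg, Equiv.Perm.inv_def, Equiv.symm_apply_apply, hfK hk, Pi.one_apply]
    _ ≤ _ := single_le_finsum (-m) hfin fun n => hf₀ _

theorem locallyFinite_support_comp_toEquiv_zpow [LocallyCompactSpace X]
    (hdisc : ∀ K : Set X, IsCompact K →
      {n : ℤ | (⇑(γ.toEquiv ^ n) '' K ∩ K).Nonempty}.Finite)
    {M : Type*} [Zero M] {f : X → M} (hf : HasCompactSupport f) :
    LocallyFinite fun n : ℤ => Function.support (f ∘ ⇑(γ.toEquiv ^ n)) := by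
  intro x
  obtain ⟨L, hL, hLx⟩ := exists_compact_mem_nhds x
  refine ⟨L, hLx, (hdisc _ (hL.union hf)).subset ?_⟩
  rintro n ⟨y, hfy, hy⟩
  exact ⟨_, mem_image_of_mem _ (Or.inl hy), Or.inr (subset_tsupport f hfy)⟩

theorem exists_continuous_apply_eq_add_one [RegularSpace X] [LocallyCompactSpace X]
    (hdisc : ∀ K : Set X, IsCompact K →
      {n : ℤ | (⇑(γ.toEquiv ^ n) '' K ∩ K).Nonempty}.Finite)
    {K : Set X} (hK : IsCompact K) (hcov : ⋃ n : ℤ, ⇑(γ.toEquiv ^ n) '' K = univ) :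
    ∃ F : X → ℝ, Continuous F ∧ ∀ x, F (γ x) = F x + 1 := by
  obtain ⟨φ, hφK, -, hφc, hφ01⟩ :=
    exists_continuous_one_zero_of_isCompact hK isClosed_empty (disjoint_empty K)
  have hlf := locallyFinite_support_comp_toEquiv_zpow hdisc hφc
  have hφγc (n : ℤ) : Continuous (φ ∘ ⇑(γ.toEquiv ^ n)) :=
    φ.continuous.comp (γ.continuous_toEquiv_zpow n)
  set S : X → ℝ := fun x => ∑ᶠ n : ℤ, φ ((γ.toEquiv ^ n) x)
  set T : X → ℝ := fun x => ∑ᶠ n : ℤ, -(n : ℝ) * φ ((γ.toEquiv ^ n) x)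
  have hS (x : X) : 1 ≤ S x :=
    one_le_finsum_comp_toEquiv_zpow hcov (fun y => (hφ01 y).1) hφK (hlf.point_finite x)
  have hSc : Continuous S := continuous_finsum hφγc hlf
  have hTc : Continuous T := continuous_finsum (fun n => continuous_const.mul (hφγc n))
    (hlf.subset fun n => Function.support_mul_subset_right _ _)
  have hS₀ (x : X) : S x ≠ 0 := (zero_lt_one.trans_le (hS x)).ne'
  refine ⟨fun x => T x / S x, hTc.div hSc hS₀, fun x => ?_⟩
  simp only [T, S, finsum_neg_mul_comp_toEquiv_zpow_apply_self (hlf.point_finite x),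
    finsum_comp_toEquiv_zpow_apply_self]
  rw [add_div, div_self (hS₀ x)]

end

/-- if X is locally compact Hausdorff and γ is a homeomorphism of X whose
generated ℤ-action is properly discontinuous and cocompact, then there is a continuous
proper F : X → ℝ with F(γ(x)) = F(x) + 1. -/
theorem stmt9 {X : Type*} [TopologicalSpace X] [LocallyCompactSpace X] [T2Space X]
    (γ : X ≃ₜ X)
    (hdisc : ∀ K : Set X, IsCompact K →
      {n : ℤ | (⇑(γ.toEquiv ^ n) '' K ∩ K).Nonempty}.Finite)
    (hcocpt : ∃ K : Set X, IsCompact K ∧ (⋃ n : ℤ, ⇑(γ.toEquiv ^ n) '' K) = Set.univ) :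
    ∃ F : X → ℝ, Continuous F ∧
      (∀ K : Set ℝ, IsCompact K → IsCompact (F ⁻¹' K)) ∧
      ∀ x : X, F (γ x) = F x + 1 := by
  obtain ⟨K, hK, hcov⟩ := hcocpt
  obtain ⟨F, hFc, hF⟩ := exists_continuous_apply_eq_add_one hdisc hK hcov
  exact ⟨F, hFc, fun A hA => isCompact_preimage_of_apply_eq_add_one hK hcov hFc hF hA, hF⟩
end

section
/- Let I be a Hausdorff topological space and f : I → EReal a continuous function never taking the value −∞, such that f⁻¹({+∞}) = P and f⁻¹([a,+∞]) is compact for every real a. Let g : [0,∞) → EReal be continuous, never −∞, with g⁻¹({+∞}) = {0} and g⁻¹([a,+∞]) compact for every real a. Set X := (I × [0,∞)) ∖ (P × {0}) with the subspace topology, and define F : X → EReal by F(x,t) := min(f(x), g(t)). Then F takes only finite (real) values on X, F is continuous as a real-valued function on X, and F is proper: for all reals a ≤ b, the set F⁻¹([a,b]) is a compact subset of X. -/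
/-!
Since `f = ⊤` exactly on `P` and `g = ⊤` exactly at `0`, the set `X` is precisely the locus
where `F < ⊤`, so `F` is finite and continuous there. Properness comes from
`{F ≥ a} = {f ≥ a} × {g ≥ a}`, a product of compact sets in which `F⁻¹[a, b]` is closed.
-/

open Set
open scoped NNReal

section MinOfProduct

variable {α β γ : Type*} [LinearOrder γ]

lemma preimage_Ici_min_prod (f : α → γ) (g : β → γ) (a : γ) :
    (fun z : α × β => min (f z.1) (g z.2)) ⁻¹' Ici a = (f ⁻¹' Ici a) ×ˢ (g ⁻¹' Ici a) := by
  ext z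
  simp only [mem_preimage, mem_Ici, le_min_iff, mem_prod]

variable [TopologicalSpace α] [TopologicalSpace β] [TopologicalSpace γ] [OrderClosedTopology γ]

lemma isCompact_preimage_Icc_min {f : α → γ} {g : β → γ} (hf : Continuous f)
    (hg : Continuous g) {a : γ} (hfa : IsCompact (f ⁻¹' Ici a))
    (hga : IsCompact (g ⁻¹' Ici a)) (b : γ) :
    IsCompact ((fun z : α × β => min (f z.1) (g z.2)) ⁻¹' Icc a b) := by
  refine (hfa.prod hga).of_isClosed_subset
    (isClosed_Icc.preimage ((hf.comp continuous_fst).min (hg.comp continuous_snd))) ?_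
  rw [← preimage_Ici_min_prod]
  exact preimage_mono Icc_subset_Ici_self

end MinOfProduct

theorem stmt10_general {I : Type*} [TopologicalSpace I] (P : Set I)
    (f : I → EReal) (hfc : Continuous f) (hfbot : ∀ x : I, f x ≠ ⊥)
    (hfP : f ⁻¹' {⊤} = P)
    (hfprop : ∀ a : ℝ, IsCompact (f ⁻¹' Set.Ici (a : EReal)))
    (g : ℝ≥0 → EReal) (hgc : Continuous g) (hgbot : ∀ t : ℝ≥0, g t ≠ ⊥)
    (hg0 : g ⁻¹' {⊤} = {0})
    (hgprop : ∀ a : ℝ, IsCompact (g ⁻¹' Set.Ici (a : EReal)))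
    (Xs : Set (I × ℝ≥0)) (hXs : Xs = {z : I × ℝ≥0 | ¬(z.1 ∈ P ∧ z.2 = 0)})
    (F : I × ℝ≥0 → EReal) (hF : ∀ z : I × ℝ≥0, F z = min (f z.1) (g z.2)) :
    (∀ z ∈ Xs, F z ≠ ⊤ ∧ F z ≠ ⊥) ∧
    ContinuousOn (fun z => (F z).toReal) Xs ∧
    (∀ a b : ℝ, a ≤ b →
      IsCompact (Xs ∩ F ⁻¹' Set.Icc (a : EReal) (b : EReal))) := by
  have hFc : Continuous F := funext hF ▸ (hfc.comp continuous_fst).min (hgc.comp continuous_snd)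
  obtain rfl : Xs = {z | F z ≠ ⊤} := by
    have hg0 : ∀ t, g t = ⊤ ↔ t = 0 := fun t => Set.ext_iff.1 hg0 t
    subst hXs hfP
    ext z
    simp [hF, hg0]
  have hfin : ∀ z, F z ≠ ⊤ → F z ≠ ⊤ ∧ F z ≠ ⊥ := fun z hz =>
    ⟨hz, hF z ▸ fun h => (min_eq_bot.1 h).elim (hfbot z.1) (hgbot z.2)⟩
  refine ⟨hfin, ?_, fun a b _ => ?_⟩
  · refine EReal.continuousOn_toReal.comp hFc.continuousOn fun z hz => ?_
    simpa [not_or] using (hfin z hz).symm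
  · have hfinite : F ⁻¹' Icc (a : EReal) b ⊆ {z | F z ≠ ⊤} := fun z hz htop =>
      EReal.coe_ne_top b (top_le_iff.1 (htop ▸ hz.2))
    rw [inter_eq_self_of_subset_right hfinite, funext hF]
    exact isCompact_preimage_Icc_min hfc hgc (hfprop a) (hgprop a) _

/-- on X = (I × [0,∞)) ∖ (P × {0}), the function
F(x,t) = min(f(x), g(t)) (with f = +∞ exactly on P, g = +∞ exactly at 0, both proper
in the upward direction and never −∞) is finite, continuous as a real-valued function,
and proper. Here [0,∞) is modelled by ℝ≥0. -/
theorem stmt10 {I : Type*} [TopologicalSpace I] [T2Space I] (P : Set I)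
    (f : I → EReal) (hfc : Continuous f) (hfbot : ∀ x : I, f x ≠ ⊥)
    (hfP : f ⁻¹' {⊤} = P)
    (hfprop : ∀ a : ℝ, IsCompact (f ⁻¹' Set.Ici (a : EReal)))
    (g : ℝ≥0 → EReal) (hgc : Continuous g) (hgbot : ∀ t : ℝ≥0, g t ≠ ⊥)
    (hg0 : g ⁻¹' {⊤} = {0})
    (hgprop : ∀ a : ℝ, IsCompact (g ⁻¹' Set.Ici (a : EReal)))
    (Xs : Set (I × ℝ≥0)) (hXs : Xs = {z : I × ℝ≥0 | ¬(z.1 ∈ P ∧ z.2 = 0)})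
    (F : I × ℝ≥0 → EReal) (hF : ∀ z : I × ℝ≥0, F z = min (f z.1) (g z.2)) :
    (∀ z ∈ Xs, F z ≠ ⊤ ∧ F z ≠ ⊥) ∧
    ContinuousOn (fun z => (F z).toReal) Xs ∧
    (∀ a b : ℝ, a ≤ b →
      IsCompact (Xs ∩ F ⁻¹' Set.Icc (a : EReal) (b : EReal))) :=
  stmt10_general P f hfc hfbot hfP hfprop g hgc hgbot hg0 hgprop Xs hXs F hF
end

section
/- Let I be a Hausdorff topological space, P ⊆ I a closed subset, and Φ : I → I a homeomorphism with Φ(P) = P. Let η : [0,∞) → [0,∞) be a homeomorphism with η(t) < t for every t > 0. Let X := (I × [0,∞)) ∖ (P × {0}) with the subspace topology, let γ : X → X be the homeomorphism γ(x,t) = (Φ(x), η(t)), and let F : X → ℝ be a continuous proper map (preimages of compact sets are compact) satisfying F(γ(z)) = F(z) + 1 for all z ∈ X. Then for every x ∈ I, F(x,t) tends to −∞ as t tends to +∞. -/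
/-!
Only points with `t > 0` matter; on them `F (γⁿ z) = F z + n` for every `n : ℤ`, so each orbit
meets the compact set `K = F⁻¹ [0, 1]`, whose `t`-coordinates are bounded by some `b`. If
`F (x, t) > M`, the orbit of `(x, t)` enters `K` after `n < 1 - M ≤ N` steps, and since `η ≤ id`
its `t`-coordinate there is `ηⁿ t ≥ η^N t`. As a homeomorphism of `[0, ∞)`, `η^N` tends to
infinity, so `η^N t > b` for large `t`, a contradiction.
-/

open Set Filter Topology
open scoped NNReal

namespace Equiv.Perm

variable {α β : Type*}

def prodCongrHom : Perm α × Perm β →* Perm (α × β) where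
  toFun σ := σ.1.prodCongr σ.2
  map_one' := rfl
  map_mul' _ _ := rfl

theorem prodCongr_zpow (σ : Perm α) (τ : Perm β) (n : ℤ) :
    σ.prodCongr τ ^ n = (σ ^ n).prodCongr (τ ^ n) :=
  (map_zpow prodCongrHom (σ, τ) n).symm

theorem antitone_zpow_apply [Preorder α] {σ : Perm α} (hσ : ∀ x, σ x ≤ x) (x : α) :
    Antitone fun n : ℤ => (σ ^ n) x :=
  antitone_int_of_succ_le fun n => by
    rw [add_comm, zpow_one_add, mul_apply]
    exact hσ _

section Translation

variable {γ : Perm α} {S : Set α} {F : α → ℝ}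

theorem zpow_apply_mem (hS : ∀ z, γ z ∈ S ↔ z ∈ S) (n : ℤ) {z : α} (hz : z ∈ S) :
    (γ ^ n) z ∈ S := by
  induction n using Int.induction_on with
  | zero => simpa using hz
  | succ n ih => rwa [add_comm, zpow_one_add, mul_apply, hS]
  | pred n ih => rwa [← hS, ← mul_apply, ← zpow_one_add, add_sub_cancel]

theorem apply_zpow_apply_eq_add (hS : ∀ z, γ z ∈ S ↔ z ∈ S)
    (hF : ∀ z ∈ S, F (γ z) = F z + 1) (n : ℤ) {z : α} (hz : z ∈ S) :
    F ((γ ^ n) z) = F z + n := by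
  induction n using Int.induction_on with
  | zero => simp
  | succ n ih =>
    rw [add_comm, zpow_one_add, mul_apply, hF _ (zpow_apply_mem hS n hz), ih]
    push_cast
    ring
  | pred n ih =>
    have hmem : (γ ^ (-(n : ℤ) - 1)) z ∈ S := zpow_apply_mem hS _ hz
    have h := hF _ hmem
    rw [← mul_apply, ← zpow_one_add, add_sub_cancel, ih] at h
    push_cast at h ⊢
    linarith

theorem exists_zpow_apply_mem_preimage_Icc (hS : ∀ z, γ z ∈ S ↔ z ∈ S)
    (hF : ∀ z ∈ S, F (γ z) = F z + 1) {z : α} (hz : z ∈ S) :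
    ∃ n : ℤ, (n : ℝ) < 1 - F z ∧ (γ ^ n) z ∈ S ∩ F ⁻¹' Icc 0 1 := by
  refine ⟨⌈-F z⌉, ?_, zpow_apply_mem hS _ hz, ?_⟩
  · linarith [Int.ceil_lt_add_one (-F z)]
  · rw [mem_preimage, apply_zpow_apply_eq_add hS hF _ hz, mem_Icc]
    constructor <;> linarith [Int.le_ceil (-F z), Int.ceil_lt_add_one (-F z)]

end Translation

end Equiv.Perm

theorem Homeomorph.tendsto_atTop {α : Type*} [TopologicalSpace α] [LinearOrder α]
    [NoMaxOrder α] [OrderBot α] [ClosedIciTopology α] [CompactIccSpace α] (e : α ≃ₜ α) :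
    Tendsto e atTop atTop := by
  rw [← cocompact_eq_atTop]
  exact e.map_cocompact.le

theorem NNReal.eq_zero_of_lt_self {f : ℝ≥0 → ℝ≥0} (hf : ContinuousAt f 0)
    (hlt : ∀ t, 0 < t → f t < t) : f 0 = 0 := by
  have hle : ∀ᶠ t in 𝓝[>] 0, f t ≤ t :=
    eventually_mem_nhdsWithin.mono fun t ht => (hlt t ht).le
  exact le_antisymm (le_of_tendsto_of_tendsto (hf.tendsto.mono_left nhdsWithin_le_nhds)
    (tendsto_id.mono_left nhdsWithin_le_nhds) hle) zero_le

theorem stmt11_general {I : Type*} [TopologicalSpace I]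
    (P : Set I)
    (Φ : I ≃ₜ I)
    (η : ℝ≥0 ≃ₜ ℝ≥0) (hη : ∀ t : ℝ≥0, 0 < t → η t < t)
    (Xs : Set (I × ℝ≥0)) (hXs : Xs = {z : I × ℝ≥0 | ¬(z.1 ∈ P ∧ z.2 = 0)})
    (F : I × ℝ≥0 → ℝ)
    (hFprop : ∀ K : Set ℝ, IsCompact K → IsCompact (Xs ∩ F ⁻¹' K))
    (hFeq : ∀ z ∈ Xs, F (Φ z.1, η z.2) = F z + 1) :
    ∀ x : I, Filter.Tendsto (fun t : ℝ≥0 => F (x, t)) Filter.atTop Filter.atBot := by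
  have hη0 : η 0 = 0 := NNReal.eq_zero_of_lt_self η.continuous.continuousAt hη
  have hηle : ∀ t, η t ≤ t := fun t =>
    (eq_zero_or_pos t).elim (fun h => by rw [h, hη0]) fun h => (hη t h).le
  set γ : Equiv.Perm (I × ℝ≥0) := Φ.toEquiv.prodCongr η.toEquiv
  set S := {z : I × ℝ≥0 | 0 < z.2}
  have hSX : S ⊆ Xs := fun z hz => hXs ▸ fun h => hz.ne' h.2
  have hγS : ∀ z, γ z ∈ S ↔ z ∈ S := fun z =>
    show 0 < η z.2 ↔ 0 < z.2 by rw [pos_iff_ne_zero, pos_iff_ne_zero, η.injective.ne_iff' hη0]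
  have hγF : ∀ z ∈ S, F (γ z) = F z + 1 := fun z hz => hFeq z (hSX hz)
  obtain ⟨b, hb⟩ := ((hFprop _ isCompact_Icc).image continuous_snd).bddAbove
  intro x
  rw [tendsto_atBot]
  intro M
  obtain ⟨N, hN⟩ := exists_nat_ge (1 - M)
  filter_upwards [(η.tendsto_atTop.iterate N).eventually_gt_atTop b, eventually_gt_atTop 0]
    with t hbt ht
  by_contra! hM
  obtain ⟨n, hn, hmem⟩ := Equiv.Perm.exists_zpow_apply_mem_preimage_Icc hγS hγF (z := (x, t)) ht
  have hnb : (η.toEquiv ^ n) t ≤ b := by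
    simpa [γ, Equiv.Perm.prodCongr_zpow] using hb ⟨_, ⟨hSX hmem.1, hmem.2⟩, rfl⟩
  have hNn : (η.toEquiv ^ (N : ℤ)) t ≤ (η.toEquiv ^ n) t :=
    Equiv.Perm.antitone_zpow_apply hηle t (by exact_mod_cast (show (n : ℝ) ≤ N by linarith))
  rw [zpow_natCast, Equiv.Perm.coe_pow] at hNn
  exact (hbt.trans_le hNn).not_ge hnb

/-- with X = (I × [0,∞)) ∖ (P × {0}), γ(x,t) = (Φ(x), η(t)), and F a
continuous proper real function on X with F ∘ γ = F + 1, one has F(x,t) → −∞ as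
t → +∞, for every x ∈ I. Here [0,∞) is modelled by ℝ≥0. -/
theorem stmt11 {I : Type*} [TopologicalSpace I] [T2Space I]
    (P : Set I) (hP : IsClosed P)
    (Φ : I ≃ₜ I) (hΦP : Φ '' P = P)
    (η : ℝ≥0 ≃ₜ ℝ≥0) (hη : ∀ t : ℝ≥0, 0 < t → η t < t)
    (Xs : Set (I × ℝ≥0)) (hXs : Xs = {z : I × ℝ≥0 | ¬(z.1 ∈ P ∧ z.2 = 0)})
    (F : I × ℝ≥0 → ℝ)
    (hFc : ContinuousOn F Xs)
    (hFprop : ∀ K : Set ℝ, IsCompact K → IsCompact (Xs ∩ F ⁻¹' K))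
    (hFeq : ∀ z ∈ Xs, F (Φ z.1, η z.2) = F z + 1) :
    ∀ x : I, Filter.Tendsto (fun t : ℝ≥0 => F (x, t)) Filter.atTop Filter.atBot :=
  stmt11_general P Φ η hη Xs hXs F hFprop hFeq
end

section
/- Let I be a Hausdorff topological space, P ⊆ I a closed subset, and Φ : I → I a homeomorphism with Φ(P) = P. Let η : [0,∞) → [0,∞) be a homeomorphism with η(t) < t for every t > 0. Let X := (I × [0,∞)) ∖ (P × {0}) with the subspace topology, let γ : X → X be the homeomorphism γ(x,t) = (Φ(x), η(t)), and let F : X → ℝ be a continuous proper map (preimages of compact sets are compact) satisfying F(γ(z)) = F(z) + 1 for all z ∈ X. Then for every p ∈ P, F(p,t) tends to +∞ as t tends to 0 from the right. -/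
/-!
Properness makes `|F|` blow up uniformly over `P` as `t → 0⁺`: for compact `K`, the heights `t`
of the points `(q, t) ∈ X` with `q ∈ P` and `F (q, t) ∈ K` form a compact subset of `ℝ≥0`
missing `0`. It remains to rule out `F (p, t) → -∞`. If `F (p, ·)` were unbounded below on
`(0, 1]`, it would take each value `F (p, 1) - n` at some `sₙ ∈ (0, 1]`; then `γⁿ (p, sₙ)` lies
over `P` on the level set `F = F (p, 1)` at height `ηⁿ sₙ ≤ ηⁿ 1 → 0`, which is impossible.
-/

open Set Filter Function
open scoped NNReal Topology

theorem Homeomorph.strictMono_of_orderBot {α : Type*} [ConditionallyCompleteLinearOrder α]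
    [TopologicalSpace α] [OrderTopology α] [DenselyOrdered α] [OrderBot α] [NoMaxOrder α]
    (e : α ≃ₜ α) : StrictMono e := by
  refine (e.continuous.strictMono_of_inj e.injective).resolve_right fun hanti => ?_
  obtain ⟨b, hb⟩ := exists_gt (e ⊥)
  obtain ⟨t, rfl⟩ := e.surjective b
  exact (hanti.antitone bot_le).not_gt hb

theorem tendsto_iterate_nhds_bot {α : Type*} [ConditionallyCompleteLinearOrderBot α]
    [TopologicalSpace α] [OrderTopology α] {f : α → α} (hf : Continuous f) (hbot : f ⊥ = ⊥)
    (hlt : ∀ t, ⊥ < t → f t < t) (x : α) : Tendsto (fun n => f^[n] x) atTop (𝓝 ⊥) := by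
  have hle : ∀ t, f t ≤ t := fun t => (eq_bot_or_bot_lt t).elim
    (fun h => h ▸ hbot.le) fun h => (hlt t h).le
  have hanti : Antitone fun n => f^[n] x :=
    antitone_nat_of_succ_le fun n => by simpa only [iterate_succ_apply'] using hle _
  have hlim := tendsto_atTop_ciInf hanti (OrderBot.bddBelow _)
  have hfix : IsFixedPt f (⨅ n, f^[n] x) := isFixedPt_of_tendsto_iterate hlim hf.continuousAt
  obtain hinf | hinf := eq_bot_or_bot_lt (⨅ n, f^[n] x)
  · rwa [hinf] at hlim
  · exact absurd hfix (hlt _ hinf).ne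

theorem apply_iterate_eq_add_nat {X R : Type*} [AddMonoidWithOne R] {g : X → X} {S : Set X}
    {F : X → R} (hg : MapsTo g S S) (hF : ∀ z ∈ S, F (g z) = F z + 1) {z : X} (hz : z ∈ S) :
    ∀ n : ℕ, F (g^[n] z) = F z + n
  | 0 => by simp
  | n + 1 => by
    rw [iterate_succ_apply', hF _ (hg.iterate n hz), apply_iterate_eq_add_nat hg hF hz n,
      Nat.cast_succ, add_assoc]

theorem tendsto_atTop_of_tendsto_cocompact {α β : Type*} [LinearOrder β] [TopologicalSpace β]
    [CompactIccSpace β] {l : Filter α} {g : α → β} (hg : Tendsto g l (cocompact β)) {m : β}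
    (hm : ∀ᶠ x in l, m ≤ g x) : Tendsto g l atTop :=
  tendsto_atTop.2 fun C => by
    filter_upwards [hg.eventually (isCompact_Icc (a := m) (b := C)).compl_mem_cocompact, hm]
      with x hxK hxm
    by_contra! h
    exact hxK ⟨hxm, h.le⟩

section

-- The space `X` of the statement is `(P ×ˢ {0})ᶜ`.
variable {I : Type*} [TopologicalSpace I] {P : Set I} {F : I × ℝ≥0 → ℝ}

theorem eventually_nhdsGT_zero_forall_notMem (hP : IsClosed P)
    (hF : ∀ K : Set ℝ, IsCompact K → IsCompact ((P ×ˢ {0})ᶜ ∩ F ⁻¹' K)) {K : Set ℝ}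
    (hK : IsCompact K) : ∀ᶠ t in 𝓝[>] (0 : ℝ≥0), ∀ q ∈ P, F (q, t) ∉ K := by
  set C := (P ×ˢ {0})ᶜ ∩ F ⁻¹' K ∩ Prod.fst ⁻¹' P
  have hC : IsCompact (Prod.snd '' C) :=
    ((hF K hK).inter_right (hP.preimage continuous_fst)).image continuous_snd
  have h0 : (0 : ℝ≥0) ∉ Prod.snd '' C := by
    rintro ⟨z, ⟨⟨hzX, -⟩, hzP⟩, hz0⟩
    exact hzX ⟨hzP, hz0⟩
  filter_upwards [nhdsWithin_le_nhds (hC.isClosed.isOpen_compl.mem_nhds h0),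
    self_mem_nhdsWithin] with t ht htpos q hq hqK
  exact ht ⟨(q, t), ⟨⟨fun h => htpos.ne' h.2, hqK⟩, hq⟩, rfl⟩

theorem tendsto_cocompact_nhdsGT_zero (hP : IsClosed P)
    (hF : ∀ K : Set ℝ, IsCompact K → IsCompact ((P ×ˢ {0})ᶜ ∩ F ⁻¹' K)) {p : I} (hp : p ∈ P) :
    Tendsto (fun t => F (p, t)) (𝓝[>] 0) (cocompact ℝ) :=
  hasBasis_cocompact.tendsto_right_iff.2 fun _K hK =>
    (eventually_nhdsGT_zero_forall_notMem hP hF hK).mono fun _t ht => ht p hp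

theorem bddBelow_image_Ioc_zero_one {Φ : I → I} {η : ℝ≥0 ≃o ℝ≥0} (hP : IsClosed P)
    (hΦP : MapsTo Φ P P) (hη : ∀ t, 0 < t → η t < t) (hFc : ContinuousOn F (P ×ˢ {0})ᶜ)
    (hF : ∀ K : Set ℝ, IsCompact K → IsCompact ((P ×ˢ {0})ᶜ ∩ F ⁻¹' K))
    (hFeq : ∀ z ∈ (P ×ˢ {0})ᶜ, F (Φ z.1, η z.2) = F z + 1) {p : I} (hp : p ∈ P) :
    BddBelow ((fun t => F (p, t)) '' Ioc 0 1) := by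
  by_contra hunb
  have hconn : IsPreconnected ((fun t => F (p, t)) '' Ioc 0 1) :=
    isPreconnected_Ioc.image _ <| hFc.comp (by fun_prop) fun t ht h => ht.1.ne' h.2
  have hlevel : ∀ n : ℕ, ∃ s ∈ Ioc (0 : ℝ≥0) 1, F (p, s) + n = F (p, 1) := by
    intro n
    obtain ⟨y, hy, hylt⟩ := not_bddBelow_iff.1 hunb (F (p, 1) - n)
    obtain ⟨s, hs, hsv⟩ := hconn.Icc_subset hy (mem_image_of_mem _ ⟨one_pos, le_rfl⟩)
      ⟨hylt.le, by simp⟩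
    exact ⟨s, hs, by linarith⟩
  choose s hs hsv using hlevel
  have hηpos : MapsTo η (Ioi 0) (Ioi 0) := fun t ht =>
    show 0 < η t from (map_bot η).symm.trans_lt (η.strictMono ht)
  have horbit (n : ℕ) : F (Φ^[n] p, η^[n] (s n)) = F (p, 1) := by
    have := apply_iterate_eq_add_nat (g := Prod.map Φ η) (hΦP.prodMap hηpos)
      (fun z hz => hFeq z fun h => (hz.2 : 0 < z.2).ne' h.2) (mk_mem_prod hp (hs n).1) n
    rwa [Prod.map_iterate, Prod.map_apply, hsv] at this
  have hheight : Tendsto (fun n => η^[n] (s n)) atTop (𝓝[>] 0) := by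
    refine tendsto_nhdsWithin_iff.2 ⟨?_, .of_forall fun n => hηpos.iterate n (hs n).1⟩
    exact tendsto_of_tendsto_of_tendsto_of_le_of_le tendsto_const_nhds
      (tendsto_iterate_nhds_bot η.continuous (map_bot η) hη 1) (fun _ => zero_le)
      fun n => η.monotone.iterate n (hs n).2
  obtain ⟨n, hn⟩ := (hheight.eventually
    (eventually_nhdsGT_zero_forall_notMem hP hF (isCompact_singleton (x := F (p, 1))))).exists
  exact hn _ (hΦP.iterate n hp) (horbit n)

end

theorem stmt12_general {I : Type*} [TopologicalSpace I]
    (P : Set I) (hP : IsClosed P)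
    (Φ : I ≃ₜ I) (hΦP : Φ '' P = P)
    (η : ℝ≥0 ≃ₜ ℝ≥0) (hη : ∀ t : ℝ≥0, 0 < t → η t < t)
    (Xs : Set (I × ℝ≥0)) (hXs : Xs = {z : I × ℝ≥0 | ¬(z.1 ∈ P ∧ z.2 = 0)})
    (F : I × ℝ≥0 → ℝ)
    (hFc : ContinuousOn F Xs)
    (hFprop : ∀ K : Set ℝ, IsCompact K → IsCompact (Xs ∩ F ⁻¹' K))
    (hFeq : ∀ z ∈ Xs, F (Φ z.1, η z.2) = F z + 1) :
    ∀ p ∈ P, Filter.Tendsto (fun t : ℝ≥0 => F (p, t))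
      (nhdsWithin 0 (Set.Ioi 0)) Filter.atTop := by
  intro p hp
  subst hXs
  let ηo : ℝ≥0 ≃o ℝ≥0 := η.strictMono_of_orderBot.orderIsoOfSurjective η η.surjective
  obtain ⟨m, hm⟩ :=
    bddBelow_image_Ioc_zero_one (η := ηo) hP (fun x hx => hΦP ▸ mem_image_of_mem Φ hx) hη hFc
      hFprop hFeq hp
  refine tendsto_atTop_of_tendsto_cocompact (tendsto_cocompact_nhdsGT_zero hP hFprop hp)
    (m := m) ?_
  filter_upwards [Ioc_mem_nhdsGT one_pos] with t ht using hm (mem_image_of_mem _ ht)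

/-- with X = (I × [0,∞)) ∖ (P × {0}), γ(x,t) = (Φ(x), η(t)), and F a
continuous proper real function on X with F ∘ γ = F + 1, one has F(p,t) → +∞ as
t → 0⁺, for every p ∈ P. Here [0,∞) is modelled by ℝ≥0. -/
theorem stmt12 {I : Type*} [TopologicalSpace I] [T2Space I]
    (P : Set I) (hP : IsClosed P)
    (Φ : I ≃ₜ I) (hΦP : Φ '' P = P)
    (η : ℝ≥0 ≃ₜ ℝ≥0) (hη : ∀ t : ℝ≥0, 0 < t → η t < t)
    (Xs : Set (I × ℝ≥0)) (hXs : Xs = {z : I × ℝ≥0 | ¬(z.1 ∈ P ∧ z.2 = 0)})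
    (F : I × ℝ≥0 → ℝ)
    (hFc : ContinuousOn F Xs)
    (hFprop : ∀ K : Set ℝ, IsCompact K → IsCompact (Xs ∩ F ⁻¹' K))
    (hFeq : ∀ z ∈ Xs, F (Φ z.1, η z.2) = F z + 1) :
    ∀ p ∈ P, Filter.Tendsto (fun t : ℝ≥0 => F (p, t))
      (nhdsWithin 0 (Set.Ioi 0)) Filter.atTop :=
  stmt12_general P hP Φ hΦP η hη Xs hXs F hFc hFprop hFeq
end

section
/- Let I be a Hausdorff, locally connected, first-countable topological space, P ⊆ I a closed subset, and Φ : I → I a homeomorphism with Φ(P) = P. Let η : [0,∞) → [0,∞) be a homeomorphism with η(t) < t for every t > 0. Let X := (I × [0,∞)) ∖ (P × {0}) with the subspace topology, let γ : X → X be the homeomorphism γ(x,t) = (Φ(x), η(t)), and let F : X → ℝ be a continuous proper map (preimages of compact sets are compact) satisfying F(γ(z)) = F(z) + 1 for all z ∈ X. Then for every p ∈ P, F(x,t) tends to +∞ as (x,t) tends to (p,0) within X: for every real M there exist a neighborhood U of p in I and ε > 0 such that F(x,t) > M for every (x,t) ∈ X with x ∈ U and t < ε. -/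
/-!
Suppose `F` stayed `≤ M` at points of `X` arbitrarily close to `(p, 0)`. Pushing a point
`(y, s)` with `y ∈ P` along `γ` raises `F` by one per step while keeping the first coordinate
in `P` and not increasing the second one; since the compact set `X ∩ F⁻¹[0, 1]` stays away
from `P × {0}`, this forces `F(p, s) ≥ 0` for small `s > 0`. Near `(p, 0)` the set `X` has
connected neighbourhoods `(V × [0, ε)) ∩ X`, so by the intermediate value theorem each of
them meets the compact, hence closed, set `X ∩ F⁻¹[0, M]`. Then `(p, 0)` lies in its closure,
so in `X`, which it does not.
-/

open Set Filter Topology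
open scoped NNReal

lemma map_zero_of_lt_self {f : ℝ≥0 → ℝ≥0} (hf : Continuous f) (hlt : ∀ t, 0 < t → f t < t) :
    f 0 = 0 := by
  refine nonpos_iff_eq_zero.mp (le_of_tendsto_of_tendsto
    (hf.continuousWithinAt (s := Ioi 0)) nhdsWithin_le_nhds ?_)
  filter_upwards [self_mem_nhdsWithin] with t ht using (hlt t ht).le

lemma apply_iterate_eq_add_of_mapsTo {α : Type*} {f : α → α} {S : Set α} (hS : MapsTo f S S) {F : α → ℝ}
    (hF : ∀ z ∈ S, F (f z) = F z + 1) {z : α} (hz : z ∈ S) (n : ℕ) :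
    F (f^[n] z) = F z + n := by
  induction n with
  | zero => simp
  | succ n ih =>
    rw [Function.iterate_succ_apply', hF _ (hS.iterate n hz), ih]
    push_cast
    ring

lemma eventually_forall_lt_snd {α : Type*} [TopologicalSpace α] {K : Set (α × ℝ≥0)}
    (hK : IsCompact K) (h0 : ∀ z ∈ K, z.2 ≠ 0) : ∀ᶠ s in 𝓝 (0 : ℝ≥0), ∀ z ∈ K, s < z.2 :=
  hK.eventually_forall_of_forall_eventually fun z hz =>
    (isOpen_lt continuous_fst (continuous_snd.comp continuous_snd)).mem_nhds
      (pos_iff_ne_zero.mpr (h0 z hz))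

section

variable {I : Type*} [TopologicalSpace I] {P : Set I}

lemma isPreconnected_prod_Iio_inter_compl {V : Set I} (hV : IsPreconnected V) {ε : ℝ≥0}
    (hε : 0 < ε) : IsPreconnected ((V ×ˢ Iio ε) ∩ (P ×ˢ {0})ᶜ) := by
  rcases V.eq_empty_or_nonempty with rfl | ⟨v, hv⟩
  · simpa using isPreconnected_empty
  have hA : IsPreconnected (V ×ˢ Ioo 0 ε) := hV.prod isPreconnected_Ioo
  have hAW : V ×ˢ Ioo 0 ε ⊆ (V ×ˢ Iio ε) ∩ (P ×ˢ {0})ᶜ := fun z ⟨hz₁, hz₂⟩ =>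
    ⟨⟨hz₁, hz₂.2⟩, fun h => hz₂.1.ne' h.2⟩
  have hmid : ∀ x ∈ V, (x, ε / 2) ∈ V ×ˢ Ioo 0 ε := fun x hx =>
    ⟨hx, half_pos hε, NNReal.half_lt_self hε.ne'⟩
  refine isPreconnected_of_forall (v, ε / 2) fun ⟨x, t⟩ ⟨⟨hx, ht⟩, hxt⟩ => ?_
  rcases eq_zero_or_pos t with rfl | ht₀
  · have hxP : x ∉ P := fun h => hxt ⟨h, rfl⟩
    refine ⟨V ×ˢ Ioo 0 ε ∪ {x} ×ˢ Iio ε, union_subset hAW ?_, Or.inl (hmid v hv),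
      Or.inr ⟨rfl, hε⟩, hA.union (x, ε / 2) (hmid x hx) ⟨rfl, (hmid x hx).2.2⟩
        (isPreconnected_singleton.prod isPreconnected_Iio)⟩
    rintro ⟨y, u⟩ ⟨rfl, hu⟩
    exact ⟨⟨hx, hu⟩, fun h => hxP h.1⟩
  · exact ⟨_, hAW, hmid v hv, ⟨hx, ht₀, ht⟩, hA⟩

lemma eventually_nonneg_of_isCompact (hP : IsClosed P) {Φ : I → I} (hΦ : MapsTo Φ P P)
    {η : ℝ≥0 → ℝ≥0} (hη_pos : ∀ t, 0 < t → 0 < η t) (hη_le : ∀ t, η t ≤ t) {F : I × ℝ≥0 → ℝ}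
    (hK : IsCompact ((P ×ˢ {0})ᶜ ∩ F ⁻¹' Icc 0 1))
    (hF : ∀ z ∈ (P ×ˢ {0})ᶜ, F (Prod.map Φ η z) = F z + 1) :
    ∀ y ∈ P, ∀ᶠ s in 𝓝[>] 0, 0 ≤ F (y, s) := by
  have hKP := eventually_forall_lt_snd (hK.inter_right (hP.preimage continuous_fst))
    fun z hz h => hz.1.1 ⟨hz.2, h⟩
  intro y hy
  rw [eventually_nhdsWithin_iff]
  filter_upwards [hKP] with s hs hs₀
  by_contra! hneg
  -- push `(y, s)` along `Prod.map Φ η` until `F` lands in `[0, 1)`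
  set n := ⌈-F (y, s)⌉₊
  have hS : MapsTo (Prod.map Φ η) (P ×ˢ Ioc 0 s) (P ×ˢ Ioc 0 s) := fun z hz =>
    ⟨hΦ hz.1, hη_pos _ hz.2.1, (hη_le _).trans hz.2.2⟩
  have hzS : (y, s) ∈ P ×ˢ Ioc 0 s := ⟨hy, hs₀, le_rfl⟩
  have hiter := hS.iterate n hzS
  have hFn := apply_iterate_eq_add_of_mapsTo hS (fun z hz => hF z fun h => hz.2.1.ne' h.2) hzS n
  refine (hs _ ⟨⟨fun h => hiter.2.1.ne' h.2, ?_, ?_⟩, hiter.1⟩).not_ge hiter.2.2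
  · rw [hFn]
    linarith [Nat.le_ceil (-F (y, s))]
  · rw [hFn]
    linarith [Nat.ceil_lt_add_one (neg_nonneg.mpr hneg.le)]

lemma exists_nhds_lt_of_isCompact [T2Space I] [LocallyConnectedSpace I] {F : I × ℝ≥0 → ℝ}
    (hFc : ContinuousOn F (P ×ˢ {0})ᶜ) {a b : ℝ} (hab : a ≤ b)
    (hK : IsCompact ((P ×ˢ {0})ᶜ ∩ F ⁻¹' Icc a b)) {p : I} (hp : p ∈ P)
    (ha : ∀ᶠ s in 𝓝[>] 0, a ≤ F (p, s)) :
    ∃ U ∈ 𝓝 p, ∃ ε : ℝ≥0, 0 < ε ∧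
      ∀ x ∈ U, ∀ t : ℝ≥0, t < ε → (x, t) ∈ (P ×ˢ {0})ᶜ → b < F (x, t) := by
  have hp₀ : (p, 0) ∈ ((P ×ˢ {0})ᶜ ∩ F ⁻¹' Icc a b)ᶜ := fun h => h.1 ⟨hp, rfl⟩
  obtain ⟨⟨V, ε⟩, ⟨⟨hVo, hpV, hVc⟩, hε⟩, hsub⟩ :=
    ((LocallyConnectedSpace.open_connected_basis p).prod_nhds NNReal.nhds_zero_basis).mem_iff.mp
      (hK.isClosed.isOpen_compl.mem_nhds hp₀)
  refine ⟨V, hVo.mem_nhds hpV, ε, hε, fun x hx t ht hxt => ?_⟩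
  by_contra! hle
  set W := (V ×ˢ Iio ε) ∩ (P ×ˢ {0})ᶜ
  have hW : IsPreconnected W := isPreconnected_prod_Iio_inter_compl hVc.isPreconnected hε
  have hxtW : (x, t) ∈ W := ⟨⟨hx, ht⟩, hxt⟩
  obtain ⟨s, has, hs₀, hsε⟩ := (ha.and (Ioo_mem_nhdsGT hε)).exists
  have hpsW : (p, s) ∈ W := ⟨⟨hpV, hsε⟩, fun h => hs₀.ne' h.2⟩
  obtain ⟨w, hwW, hw⟩ : ∃ w ∈ W, F w ∈ Icc a b := by
    rcases le_or_gt a (F (x, t)) with h | h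
    · exact ⟨_, hxtW, h, hle⟩
    · obtain ⟨w, hwW, hwa⟩ :=
        hW.intermediate_value hxtW hpsW (hFc.mono inter_subset_right) ⟨h.le, has⟩
      exact ⟨w, hwW, by rw [hwa]; exact ⟨le_rfl, hab⟩⟩
  exact hsub hwW.1 ⟨hwW.2, hw⟩

end

theorem stmt13_general {I : Type*} [TopologicalSpace I] [T2Space I]
    [LocallyConnectedSpace I]
    (P : Set I) (hP : IsClosed P)
    (Φ : I ≃ₜ I) (hΦP : Φ '' P = P)
    (η : ℝ≥0 ≃ₜ ℝ≥0) (hη : ∀ t : ℝ≥0, 0 < t → η t < t)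
    (Xs : Set (I × ℝ≥0)) (hXs : Xs = {z : I × ℝ≥0 | ¬(z.1 ∈ P ∧ z.2 = 0)})
    (F : I × ℝ≥0 → ℝ)
    (hFc : ContinuousOn F Xs)
    (hFprop : ∀ K : Set ℝ, IsCompact K → IsCompact (Xs ∩ F ⁻¹' K))
    (hFeq : ∀ z ∈ Xs, F (Φ z.1, η z.2) = F z + 1) :
    ∀ p ∈ P, ∀ M : ℝ, ∃ U ∈ nhds p, ∃ ε : ℝ≥0, 0 < ε ∧
      ∀ x ∈ U, ∀ t : ℝ≥0, t < ε → (x, t) ∈ Xs → M < F (x, t) := by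
  replace hXs : Xs = (P ×ˢ {0})ᶜ := hXs
  subst hXs
  intro p hp M
  have hη₀ : η 0 = 0 := map_zero_of_lt_self η.continuous hη
  have hη_pos : ∀ t, 0 < t → 0 < η t := fun t ht =>
    pos_iff_ne_zero.mpr fun h => ht.ne' (η.injective (h.trans hη₀.symm))
  have hη_le : ∀ t, η t ≤ t := fun t => (eq_zero_or_pos t).elim
    (fun h => h ▸ hη₀.le) fun ht => (hη t ht).le
  have hΦ : MapsTo Φ P P := fun x hx => hΦP ▸ mem_image_of_mem Φ hx
  have hnonneg := eventually_nonneg_of_isCompact hP hΦ hη_pos hη_le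
    (hFprop _ isCompact_Icc) hFeq p hp
  obtain ⟨U, hU, ε, hε, hlt⟩ := exists_nhds_lt_of_isCompact hFc (le_max_right M 0)
    (hFprop _ isCompact_Icc) hp hnonneg
  exact ⟨U, hU, ε, hε, fun x hx t ht hxt => (le_max_left M 0).trans_lt (hlt x hx t ht hxt)⟩

/-- with X = (I × [0,∞)) ∖ (P × {0}), I moreover locally connected and
first-countable, γ(x,t) = (Φ(x), η(t)), and F a continuous proper real function on X
with F ∘ γ = F + 1, one has F(x,t) → +∞ as (x,t) → (p,0) within X, for every p ∈ P:
for every M there are a neighborhood U of p and ε > 0 with F > M on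
(U × [0,ε)) ∩ X. Here [0,∞) is modelled by ℝ≥0. -/
theorem stmt13 {I : Type*} [TopologicalSpace I] [T2Space I]
    [LocallyConnectedSpace I] [FirstCountableTopology I]
    (P : Set I) (hP : IsClosed P)
    (Φ : I ≃ₜ I) (hΦP : Φ '' P = P)
    (η : ℝ≥0 ≃ₜ ℝ≥0) (hη : ∀ t : ℝ≥0, 0 < t → η t < t)
    (Xs : Set (I × ℝ≥0)) (hXs : Xs = {z : I × ℝ≥0 | ¬(z.1 ∈ P ∧ z.2 = 0)})
    (F : I × ℝ≥0 → ℝ)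
    (hFc : ContinuousOn F Xs)
    (hFprop : ∀ K : Set ℝ, IsCompact K → IsCompact (Xs ∩ F ⁻¹' K))
    (hFeq : ∀ z ∈ Xs, F (Φ z.1, η z.2) = F z + 1) :
    ∀ p ∈ P, ∀ M : ℝ, ∃ U ∈ nhds p, ∃ ε : ℝ≥0, 0 < ε ∧
      ∀ x ∈ U, ∀ t : ℝ≥0, t < ε → (x, t) ∈ Xs → M < F (x, t) :=
  stmt13_general P hP Φ hΦP η hη Xs hXs F hFc hFprop hFeq
end

section
/- Let I be a Hausdorff, locally connected, first-countable topological space, P ⊆ I a closed subset, and Φ : I → I a homeomorphism with Φ(P) = P. Let η : [0,∞) → [0,∞) be a homeomorphism with η(t) < t for every t > 0. Let X := (I × [0,∞)) ∖ (P × {0}) with the subspace topology, let γ : X → X be the homeomorphism γ(x,t) = (Φ(x), η(t)), and let F : X → ℝ be a continuous proper map (preimages of compact sets are compact) satisfying F(γ(z)) = F(z) + 1 for all z ∈ X. Define f : I ∖ P → ℝ by f(x) := F(x,0) and set C := P ∪ { x ∈ I ∖ P : f(x) ≥ 0 }. Then: (1) Φ(C) is contained in the topological interior of C; (2) ⋂_{i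 ∈ ℤ} Φ^i(C) = P; and (3) ⋃_{i ∈ ℤ} Φ^i(C) = I. -/
open Set Filter Topology
open scoped NNReal

/-!
For `x ∈ P`, `F (x, t)` is positive for all small `t > 0`, uniformly in `x`: push `(x, t)` with
`F (x, t) ≤ 0` forward by `γ` until `F` lands in `[-1, 0]`; this keeps the point over `P` and at
height `≤ t`, while the compact set `F⁻¹[-1, 0]` stays away from `P × {0}`. Near a point of `P`,
a vertical segment `{y} × [0, t₀]` with `y ∉ P` then has `F > 0` at its top and, by the tube lemma
for the compact level set `F⁻¹{0}`, no zero of `F`, so `F (y, 0) > 0`. Everything else follows from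
`f ∘ Φ = f + 1` off `P`.
-/

theorem apply_zero_eq_zero_of_lt_self {η : ℝ≥0 → ℝ≥0} (hc : Continuous η)
    (hη : ∀ t, 0 < t → η t < t) : η 0 = 0 := by
  refine le_antisymm (le_of_tendsto_of_tendsto
    ((hc.tendsto 0).mono_left (nhdsWithin_le_nhds (s := Ioi 0)))
    (tendsto_nhdsWithin_of_tendsto_nhds tendsto_id) ?_) zero_le
  filter_upwards [self_mem_nhdsWithin] with t ht using (hη t ht).le

theorem iterate_apply_eq_add_nat {α : Type*} {f : α → α} {s : Set α} {F : α → ℝ}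
    (hf : MapsTo f s s) (hF : ∀ z ∈ s, F (f z) = F z + 1) (n : ℕ) {z : α} (hz : z ∈ s) :
    F (f^[n] z) = F z + n := by
  induction n with
  | zero => simp
  | succ n ih =>
    rw [Function.iterate_succ_apply', hF _ (hf.iterate n hz), ih]
    push_cast
    ring

def nonnegRegion {α : Type*} (P : Set α) (g : α → ℝ) : Set α :=
  P ∪ {x | x ∉ P ∧ 0 ≤ g x}

section ProperShift

variable {I : Type*} [TopologicalSpace I] {P : Set I} {F : I × ℝ≥0 → ℝ}

theorem exists_pos_forall_pos_of_isCompact {Φ : I → I} {η : ℝ≥0 → ℝ≥0}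
    (hP : IsClosed P) (hΦ : MapsTo Φ P P) (hη : η ≤ id)
    (hγ : MapsTo (Prod.map Φ η) (P ×ˢ {0})ᶜ (P ×ˢ {0})ᶜ)
    (hF : ∀ z ∈ (P ×ˢ {0})ᶜ, F (Prod.map Φ η z) = F z + 1)
    (hK : IsCompact ((P ×ˢ {0})ᶜ ∩ F ⁻¹' Icc (-1) 0)) :
    ∃ ε > 0, ∀ x ∈ P, ∀ t ∈ Ioo 0 ε, 0 < F (x, t) := by
  set S := Prod.snd '' ((P ×ˢ {0})ᶜ ∩ F ⁻¹' Icc (-1) 0 ∩ Prod.fst ⁻¹' P)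
  have hS : IsClosed S :=
    ((hK.inter_right (hP.preimage continuous_fst)).image continuous_snd).isClosed
  have h0 : (0 : ℝ≥0) ∉ S := by
    rintro ⟨z, ⟨⟨hz, -⟩, hzP⟩, hz0⟩
    exact hz ⟨hzP, hz0⟩
  obtain ⟨ε, hε, hεS⟩ :=
    exists_Ico_subset_of_mem_nhds (hS.isOpen_compl.mem_nhds h0) ⟨1, one_pos⟩
  refine ⟨ε, hε, fun x hx t ht => ?_⟩
  by_contra! hFx
  set n := ⌊-F (x, t)⌋₊
  have hz : (x, t) ∈ (P ×ˢ {0})ᶜ := fun h => ht.1.ne' h.2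
  have hFn := iterate_apply_eq_add_nat hγ hF n hz
  have hγn := hγ.iterate n hz
  rw [Prod.map_iterate] at hFn hγn
  refine hεS ⟨zero_le, (Function.iterate_le_id_of_le_id hη n t).trans_lt ht.2⟩
    ⟨_, ⟨⟨hγn, ?_⟩, hΦ.iterate n hx⟩, rfl⟩
  rw [mem_preimage, hFn, mem_Icc]
  constructor <;> linarith [Nat.floor_le (neg_nonneg.2 hFx), Nat.lt_floor_add_one (-F (x, t))]

theorem mem_interior_nonnegRegion_of_forall_pos [T2Space I] (hP : IsClosed P)
    (hFc : ContinuousOn F (P ×ˢ {0})ᶜ) (hZ : IsCompact ((P ×ˢ {0})ᶜ ∩ F ⁻¹' {0}))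
    {x : I} (hx : x ∈ P) {ε : ℝ≥0} (hε : 0 < ε) (hpos : ∀ t ∈ Ioo 0 ε, 0 < F (x, t)) :
    x ∈ interior (nonnegRegion P fun y => F (y, 0)) := by
  set t₀ := ε / 2
  have ht₀ : t₀ ∈ Ioo 0 ε := ⟨half_pos hε, NNReal.half_lt_self hε.ne'⟩
  have hsub : {x} ×ˢ Icc 0 t₀ ⊆ ((P ×ˢ {0})ᶜ ∩ F ⁻¹' {0})ᶜ := by
    rintro ⟨_, t⟩ ⟨rfl, ht⟩ ⟨hz, hF0⟩
    rcases eq_zero_or_pos t with rfl | htpos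
    · exact hz ⟨hx, rfl⟩
    · exact (hpos t ⟨htpos, ht.2.trans_lt ht₀.2⟩).ne' hF0
  obtain ⟨U, V, hU, -, hxU, hV, hUV⟩ :=
    generalized_tube_lemma isCompact_singleton isCompact_Icc hZ.isClosed.isOpen_compl hsub
  have hx₀ : (x, t₀) ∈ (P ×ˢ {0})ᶜ := fun h => ht₀.1.ne' h.2
  have hcont : ContinuousAt (fun y => F (y, t₀)) x :=
    (hFc.continuousAt ((hP.prod isClosed_singleton).isOpen_compl.mem_nhds hx₀)).comp
      (f := fun y => (y, t₀)) (by fun_prop)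
  rw [mem_interior_iff_mem_nhds]
  filter_upwards [hU.mem_nhds (hxU rfl), hcont.eventually (lt_mem_nhds (hpos t₀ ht₀))]
    with y hyU hyt₀
  refine or_iff_not_imp_left.2 fun hy => ⟨hy, not_lt.1 fun hneg => ?_⟩
  have hline : ContinuousOn (fun s => F (y, s)) (Icc 0 t₀) :=
    hFc.comp (Continuous.prodMk_right y).continuousOn fun s _ h => hy h.1
  obtain ⟨s, hs, hFs⟩ := intermediate_value_Icc zero_le hline ⟨hneg.le, hyt₀.le⟩
  exact hUV ⟨hyU, hV hs⟩ ⟨fun h => hy h.1, hFs⟩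

theorem isOpen_setOf_notMem_and_pos (hP : IsClosed P) (hFc : ContinuousOn F (P ×ˢ {0})ᶜ) :
    IsOpen {y | y ∉ P ∧ 0 < F (y, 0)} :=
  (hFc.comp (Continuous.prodMk_left 0).continuousOn
    fun y (hy : y ∉ P) h => hy h.1).isOpen_inter_preimage hP.isOpen_compl isOpen_Ioi

theorem image_nonnegRegion_subset_interior {Φ : I → I} (hP : IsClosed P)
    (hFc : ContinuousOn F (P ×ˢ {0})ᶜ) (hΦP : ∀ x, Φ x ∈ P ↔ x ∈ P)
    (hshift : ∀ x ∉ P, F (Φ x, 0) = F (x, 0) + 1)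
    (hPint : P ⊆ interior (nonnegRegion P fun y => F (y, 0))) :
    Φ '' nonnegRegion P (fun y => F (y, 0)) ⊆ interior (nonnegRegion P fun y => F (y, 0)) := by
  rintro _ ⟨x, hx | ⟨hx, hx0⟩, rfl⟩
  · exact hPint ((hΦP x).2 hx)
  · refine (isOpen_setOf_notMem_and_pos hP hFc).subset_interior_iff.2
      (fun y hy => Or.inr ⟨hy.1, hy.2.le⟩) ⟨mt (hΦP x).1 hx, ?_⟩
    linarith [hshift x hx]

end ProperShift

section Perm

variable {α : Type*} {σ : Equiv.Perm α} {P : Set α} {g : α → ℝ}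

theorem zpow_apply_mem_iff (hσP : ∀ x, σ x ∈ P ↔ x ∈ P) (i : ℤ) (x : α) :
    (σ ^ i) x ∈ P ↔ x ∈ P := by
  have hpow : ∀ (n : ℕ) x, (σ ^ n) x ∈ P ↔ x ∈ P := by
    intro n
    induction n with
    | zero => simp
    | succ n ih => intro x; rw [pow_succ', Equiv.Perm.mul_apply, hσP, ih]
  obtain ⟨n, rfl | rfl⟩ := i.eq_nat_or_neg
  · simpa using hpow n x
  · simpa using (hpow n ((σ ^ n)⁻¹ x)).symm

theorem zpow_apply_eq_add (hσP : ∀ x, σ x ∈ P ↔ x ∈ P) (hg : ∀ x ∉ P, g (σ x) = g x + 1)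
    (i : ℤ) {x : α} (hx : x ∉ P) : g ((σ ^ i) x) = g x + i := by
  have hpow : ∀ (n : ℕ) {x}, x ∉ P → g ((σ ^ n) x) = g x + n := fun n x hx => by
    rw [Equiv.Perm.coe_pow]
    exact iterate_apply_eq_add_nat (fun y hy => mt (hσP y).1 hy) hg n hx
  obtain ⟨n, rfl | rfl⟩ := i.eq_nat_or_neg
  · simpa using hpow n hx
  · have hy : (σ ^ n)⁻¹ x ∉ P := by
      simpa [zpow_neg] using (zpow_apply_mem_iff hσP (-n) x).not.2 hx
    have := hpow n hy
    rw [zpow_neg, zpow_natCast]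
    simp only [Equiv.Perm.coe_inv, Equiv.apply_symm_apply] at this ⊢
    push_cast
    linarith

theorem mem_zpow_image_nonnegRegion_iff (hσP : ∀ x, σ x ∈ P ↔ x ∈ P)
    (hg : ∀ x ∉ P, g (σ x) = g x + 1) (i : ℤ) (y : α) :
    y ∈ (σ ^ i) '' nonnegRegion P g ↔ y ∈ P ∨ (y ∉ P ∧ (i : ℝ) ≤ g y) := by
  rw [Equiv.image_eq_preimage_symm, ← Equiv.Perm.inv_def, ← zpow_neg, mem_preimage,
    nonnegRegion, mem_union, mem_ofPred_eq, zpow_apply_mem_iff hσP]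
  by_cases hy : y ∈ P
  · simp [hy]
  · simp only [hy, false_or, not_false_eq_true, true_and, zpow_apply_eq_add hσP hg _ hy]
    push_cast
    constructor <;> intro <;> linarith

theorem iInter_zpow_image_nonnegRegion (hσP : ∀ x, σ x ∈ P ↔ x ∈ P)
    (hg : ∀ x ∉ P, g (σ x) = g x + 1) : ⋂ i : ℤ, ⇑(σ ^ i) '' nonnegRegion P g = P := by
  ext y
  simp only [mem_iInter, mem_zpow_image_nonnegRegion_iff hσP hg]
  refine ⟨fun h => ?_, fun hy _ => Or.inl hy⟩
  obtain ⟨i, hi⟩ := exists_int_gt (g y)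
  exact (h i).resolve_right fun h' => hi.not_ge h'.2

theorem iUnion_zpow_image_nonnegRegion (hσP : ∀ x, σ x ∈ P ↔ x ∈ P)
    (hg : ∀ x ∉ P, g (σ x) = g x + 1) : ⋃ i : ℤ, ⇑(σ ^ i) '' nonnegRegion P g = univ :=
  eq_univ_of_forall fun y => mem_iUnion.2 ⟨⌊g y⌋,
    (mem_zpow_image_nonnegRegion_iff hσP hg _ y).2 <|
      or_iff_not_imp_left.2 fun hy => ⟨hy, Int.floor_le _⟩⟩

end Perm

theorem stmt15_general {I : Type*} [TopologicalSpace I] [T2Space I]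
    (P : Set I) (hP : IsClosed P)
    (Φ : I ≃ₜ I) (hΦP : Φ '' P = P)
    (η : ℝ≥0 ≃ₜ ℝ≥0) (hη : ∀ t : ℝ≥0, 0 < t → η t < t)
    (Xs : Set (I × ℝ≥0)) (hXs : Xs = {z : I × ℝ≥0 | ¬(z.1 ∈ P ∧ z.2 = 0)})
    (F : I × ℝ≥0 → ℝ)
    (hFc : ContinuousOn F Xs)
    (hFprop : ∀ K : Set ℝ, IsCompact K → IsCompact (Xs ∩ F ⁻¹' K))
    (hFeq : ∀ z ∈ Xs, F (Φ z.1, η z.2) = F z + 1)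
    (C : Set I) (hC : C = P ∪ {x : I | x ∉ P ∧ 0 ≤ F (x, 0)}) :
    Φ '' C ⊆ interior C ∧
    (⋂ i : ℤ, ⇑(Φ.toEquiv ^ i) '' C) = P ∧
    (⋃ i : ℤ, ⇑(Φ.toEquiv ^ i) '' C) = Set.univ := by
  subst hXs hC
  have hη0 : η 0 = 0 := apply_zero_eq_zero_of_lt_self η.continuous hη
  have hηle : ⇑η ≤ id := fun t => (eq_zero_or_pos t).elim (fun h => h ▸ hη0.le) (hη t · |>.le)
  have hΦ_mem : ∀ x, Φ x ∈ P ↔ x ∈ P := fun x => by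
    simpa only [hΦP] using Φ.injective.mem_set_image (s := P) (a := x)
  have hγ : MapsTo (Prod.map Φ η) (P ×ˢ {0})ᶜ (P ×ˢ {0})ᶜ := fun z hz h =>
    hz ⟨(hΦ_mem z.1).1 h.1, η.injective (h.2.trans hη0.symm)⟩
  have hshift : ∀ x ∉ P, F (Φ x, 0) = F (x, 0) + 1 := fun x hx => by
    simpa [hη0] using hFeq (x, 0) fun h => hx h.1
  obtain ⟨ε, hε, hpos⟩ := exists_pos_forall_pos_of_isCompact hP (fun x => (hΦ_mem x).2) hηle hγ
    hFeq (hFprop _ isCompact_Icc)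
  have hPint : P ⊆ interior (nonnegRegion P fun x => F (x, 0)) := fun x hx =>
    mem_interior_nonnegRegion_of_forall_pos hP hFc (hFprop _ isCompact_singleton) hx hε
      (hpos x hx)
  exact ⟨image_nonnegRegion_subset_interior hP hFc hΦ_mem hshift hPint,
    iInter_zpow_image_nonnegRegion hΦ_mem hshift, iUnion_zpow_image_nonnegRegion hΦ_mem hshift⟩

/-- in the same setting, with f(x) := F(x,0) on I ∖ P and
C := P ∪ {f ≥ 0}, one has Φ(C) ⊆ int C, ⋂_{i∈ℤ} Φ^i(C) = P and ⋃_{i∈ℤ} Φ^i(C) = I.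
Here [0,∞) is modelled by ℝ≥0. -/
theorem stmt15 {I : Type*} [TopologicalSpace I] [T2Space I]
    [LocallyConnectedSpace I] [FirstCountableTopology I]
    (P : Set I) (hP : IsClosed P)
    (Φ : I ≃ₜ I) (hΦP : Φ '' P = P)
    (η : ℝ≥0 ≃ₜ ℝ≥0) (hη : ∀ t : ℝ≥0, 0 < t → η t < t)
    (Xs : Set (I × ℝ≥0)) (hXs : Xs = {z : I × ℝ≥0 | ¬(z.1 ∈ P ∧ z.2 = 0)})
    (F : I × ℝ≥0 → ℝ)
    (hFc : ContinuousOn F Xs)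
    (hFprop : ∀ K : Set ℝ, IsCompact K → IsCompact (Xs ∩ F ⁻¹' K))
    (hFeq : ∀ z ∈ Xs, F (Φ z.1, η z.2) = F z + 1)
    (C : Set I) (hC : C = P ∪ {x : I | x ∉ P ∧ 0 ≤ F (x, 0)}) :
    Φ '' C ⊆ interior C ∧
    (⋂ i : ℤ, ⇑(Φ.toEquiv ^ i) '' C) = P ∧
    (⋃ i : ℤ, ⇑(Φ.toEquiv ^ i) '' C) = Set.univ :=
  stmt15_general P hP Φ hΦP η hη Xs hXs F hFc hFprop hFeq C hC
end

section
/- Let η : (0,∞) → (0,∞) be a homeomorphism with η(t) < t for every t > 0. Then there exists a strictly decreasing continuous surjection g : (0,∞) → ℝ such that g(η(t)) = g(t) + 1 for every t > 0. In particular g(t) → +∞ as t → 0⁺ and g(t) → −∞ as t → +∞. -/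
/-!
Conjugated by `exp`, `η` becomes an order automorphism `q` of `ℝ` with `q x < x`. The orbit
`n ↦ qⁿ 0` over `n : ℤ` is strictly decreasing, and unbounded in both directions because a finite
limit would be a fixed point of `q`; so the intervals `(qⁿ⁺¹ 0, qⁿ 0]` tile `ℝ`. The function
`x ↦ x / q 0` on the fundamental interval `(q 0, 0]`, extended by `g (q x) = g x + 1`, is then a
strictly decreasing surjection of `ℝ` onto `ℝ`, hence continuous.
-/

open Set Filter Topology Function

theorem Antitone.isGreatest_setOf_le_iff {α : Type*} [LinearOrder α] {c : ℤ → α}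
    (hc : Antitone c) {x : α} {n : ℤ} :
    IsGreatest {m | x ≤ c m} n ↔ x ∈ Ioc (c (n + 1)) (c n) := by
  refine ⟨fun h ↦ ⟨not_le.1 fun hx ↦ (h.2 hx).not_gt (lt_add_one n), h.1⟩,
    fun h ↦ ⟨h.2, fun m hm ↦ not_lt.1 fun hnm ↦ ?_⟩⟩
  exact (hm.trans (hc hnm)).not_gt h.1

section Order

variable {α β : Type*} [TopologicalSpace α] [TopologicalSpace β]

theorem Antitone.continuous_of_surjective [LinearOrder α] [OrderTopology α] [LinearOrder β]
    [OrderTopology β] [DenselyOrdered β] {f : α → β} (hf : Antitone f) (hs : Surjective f) :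
    Continuous f :=
  Monotone.continuous_of_surjective (β := βᵒᵈ) hf hs

theorem Continuous.strictMono_of_injective_of_lt [ConditionallyCompleteLinearOrder α]
    [OrderTopology α] [DenselyOrdered α] [Nonempty α] {f : α → α} (hf : Continuous f)
    (hinj : Injective f) (hlt : ∀ x, f x < x) : StrictMono f :=
  (hf.strictMono_of_inj hinj).resolve_right fun hanti ↦
    let a := Classical.arbitrary α
    (hlt (f a)).asymm (hanti (hlt a))

end Order

namespace OrderIso

variable {α : Type*}

section Preorder

variable [Preorder α] {q : α ≃o α}

theorem zpow_apply_zpow_apply (q : α ≃o α) (m n : ℤ) (x : α) :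
    (q ^ m) ((q ^ n) x) = (q ^ (m + n)) x := by
  rw [zpow_add, RelIso.mul_apply]

theorem zpow_add_one_apply (q : α ≃o α) (n : ℤ) (x : α) : (q ^ (n + 1)) x = q ((q ^ n) x) := by
  rw [add_comm, ← zpow_apply_zpow_apply, zpow_one]

theorem strictAnti_zpow_apply (hq : ∀ x, q x < x) (x : α) :
    StrictAnti fun n : ℤ ↦ (q ^ n) x :=
  strictAnti_int_of_succ_lt fun n ↦ by rw [zpow_add_one_apply]; exact hq _

theorem zpow_neg_add_one_apply (q : α ≃o α) (n : ℤ) (x : α) :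
    (q ^ (-(n + 1))) (q x) = (q ^ (-n)) x := by
  simpa [zpow_one, show -(n + 1) + 1 = -n by ring] using zpow_apply_zpow_apply q (-(n + 1)) 1 x

end Preorder

section Topology

variable [ConditionallyCompleteLinearOrder α] [TopologicalSpace α] [OrderTopology α]
  {q : α ≃o α}

theorem not_tendsto_zpow_apply (hq : ∀ x, q x ≠ x) {l : Filter ℤ} [l.NeBot]
    (hl : Tendsto (· + 1) l l) (x y : α) : ¬Tendsto (fun n : ℤ ↦ (q ^ n) x) l (𝓝 y) :=
  fun h ↦ hq y <| tendsto_nhds_unique ((q.continuous.tendsto y).comp h) <| by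
    simpa only [comp_def, zpow_add_one_apply] using h.comp hl

theorem tendsto_zpow_apply_atTop (hq : ∀ x, q x < x) (x : α) :
    Tendsto (fun n : ℤ ↦ (q ^ n) x) atTop atBot :=
  (tendsto_atTop_of_antitone (strictAnti_zpow_apply hq x).antitone).resolve_right
    fun ⟨y, hy⟩ ↦ not_tendsto_zpow_apply (fun x ↦ (hq x).ne)
      (tendsto_atTop_add_const_right _ 1 tendsto_id) x y hy

theorem tendsto_zpow_apply_atBot (hq : ∀ x, q x < x) (x : α) :
    Tendsto (fun n : ℤ ↦ (q ^ n) x) atBot atTop :=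
  (tendsto_atBot_of_antitone (strictAnti_zpow_apply hq x).antitone).resolve_right
    fun ⟨y, hy⟩ ↦ not_tendsto_zpow_apply (fun x ↦ (hq x).ne)
      (tendsto_atBot_add_const_right _ 1 tendsto_id) x y hy

end Topology

section Real

variable {q : ℝ ≃o ℝ} {x : ℝ} {n : ℤ}

noncomputable def orbitIndex (q : ℝ ≃o ℝ) (x : ℝ) : ℤ := sSup {n : ℤ | x ≤ (q ^ n) 0}

theorem orbitIndex_eq_iff_mem_Ioc (hq : ∀ x, q x < x) :
    orbitIndex q x = n ↔ x ∈ Ioc ((q ^ (n + 1)) 0) ((q ^ n) 0) := by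
  have hanti := strictAnti_zpow_apply hq 0
  obtain ⟨k, hk⟩ := ((tendsto_zpow_apply_atTop hq 0).eventually_lt_atBot x).exists
  obtain ⟨m, hm⟩ := ((tendsto_zpow_apply_atBot hq 0).eventually_ge_atTop x).exists
  obtain ⟨N, hN⟩ : ∃ N, IsGreatest {n : ℤ | x ≤ (q ^ n) 0} N :=
    BddAbove.exists_isGreatest_of_nonempty ⟨k, fun n hn ↦ (hanti.lt_iff_gt.1 (hk.trans_le hn)).le⟩
      ⟨m, hm⟩
  rw [← hanti.antitone.isGreatest_setOf_le_iff, orbitIndex, hN.csSup_eq]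
  exact ⟨fun h ↦ h ▸ hN, hN.unique⟩

theorem zpow_neg_apply_mem_Ioc_iff (q : ℝ ≃o ℝ) (n : ℤ) (x : ℝ) :
    (q ^ (-n)) x ∈ Ioc (q 0) 0 ↔ x ∈ Ioc ((q ^ (n + 1)) 0) ((q ^ n) 0) := by
  obtain ⟨y, rfl⟩ := (q ^ n).surjective x
  rw [zpow_neg, RelIso.inv_apply_self, ← zpow_apply_zpow_apply q n 1, zpow_one, mem_Ioc, mem_Ioc,
    (q ^ n).lt_iff_lt, (q ^ n).le_iff_le]

theorem orbitIndex_eq_iff (hq : ∀ x, q x < x) :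
    orbitIndex q x = n ↔ (q ^ (-n)) x ∈ Ioc (q 0) 0 := by
  rw [orbitIndex_eq_iff_mem_Ioc hq, zpow_neg_apply_mem_Ioc_iff]

theorem mem_Ioc_orbitIndex (hq : ∀ x, q x < x) (x : ℝ) :
    x ∈ Ioc ((q ^ (orbitIndex q x + 1)) 0) ((q ^ orbitIndex q x) 0) :=
  (orbitIndex_eq_iff_mem_Ioc hq).1 rfl

theorem zpow_neg_orbitIndex_apply_mem_Ioc (hq : ∀ x, q x < x) (x : ℝ) :
    (q ^ (-orbitIndex q x)) x ∈ Ioc (q 0) 0 :=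
  (orbitIndex_eq_iff hq).1 rfl

theorem antitone_orbitIndex (hq : ∀ x, q x < x) : Antitone (orbitIndex q) := by
  intro x y hxy
  by_contra! h
  exact ((mem_Ioc_orbitIndex hq x).1.trans_le hxy).not_ge
    ((mem_Ioc_orbitIndex hq y).2.trans ((strictAnti_zpow_apply hq 0).antitone h))

theorem orbitIndex_self_apply (hq : ∀ x, q x < x) (x : ℝ) :
    orbitIndex q (q x) = orbitIndex q x + 1 := by
  rw [orbitIndex_eq_iff hq, zpow_neg_add_one_apply, ← orbitIndex_eq_iff hq]

noncomputable def timeFunction (q : ℝ ≃o ℝ) (x : ℝ) : ℝ :=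
  orbitIndex q x + (q ^ (-orbitIndex q x)) x / q 0

theorem timeFunction_self_apply (hq : ∀ x, q x < x) (x : ℝ) :
    timeFunction q (q x) = timeFunction q x + 1 := by
  rw [timeFunction, timeFunction, orbitIndex_self_apply hq, zpow_neg_add_one_apply]
  push_cast
  ring

theorem timeFunction_mem_Ico (hq : ∀ x, q x < x) (x : ℝ) :
    timeFunction q x ∈ Ico (orbitIndex q x : ℝ) (orbitIndex q x + 1) := by
  have h := zpow_neg_orbitIndex_apply_mem_Ioc hq x
  exact ⟨le_add_of_nonneg_right (div_nonneg_of_nonpos h.2 (hq 0).le),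
    add_lt_add_right ((div_lt_one_of_neg (hq 0)).2 h.1) _⟩

theorem strictAnti_timeFunction (hq : ∀ x, q x < x) : StrictAnti (timeFunction q) := by
  intro x y hxy
  rcases (antitone_orbitIndex hq hxy.le).lt_or_eq with h | h
  · calc timeFunction q y < orbitIndex q y + 1 := (timeFunction_mem_Ico hq y).2
      _ ≤ orbitIndex q x := by exact_mod_cast h
      _ ≤ timeFunction q x := (timeFunction_mem_Ico hq x).1
  · rw [timeFunction, timeFunction, h]
    exact add_lt_add_right ((div_lt_div_right_of_neg (hq 0)).2 ((q ^ _).lt_iff_lt.2 hxy)) _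

theorem surjective_timeFunction (hq : ∀ x, q x < x) : Surjective (timeFunction q) := by
  intro s
  have hq0 : q 0 < 0 := hq 0
  have hmem : Int.fract s * q 0 ∈ Ioc (q 0) 0 :=
    ⟨by nlinarith [Int.fract_lt_one s], mul_nonpos_of_nonneg_of_nonpos (Int.fract_nonneg s) hq0.le⟩
  have hback : (q ^ (-⌊s⌋)) ((q ^ ⌊s⌋) (Int.fract s * q 0)) = Int.fract s * q 0 := by
    rw [zpow_neg, RelIso.inv_apply_self]
  refine ⟨(q ^ ⌊s⌋) (Int.fract s * q 0), ?_⟩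
  rw [timeFunction, (orbitIndex_eq_iff hq).2 (hback ▸ hmem), hback, mul_div_cancel_right₀ _ hq0.ne,
    Int.floor_add_fract]

theorem continuous_timeFunction (hq : ∀ x, q x < x) : Continuous (timeFunction q) :=
  (strictAnti_timeFunction hq).antitone.continuous_of_surjective (surjective_timeFunction hq)

end Real

end OrderIso

/-- for every homeomorphism η of (0,∞) with η(t) < t for all t, there is
a strictly decreasing continuous surjection g : (0,∞) → ℝ with g(η(t)) = g(t) + 1; in
particular g(t) → +∞ as t → 0⁺ and g(t) → −∞ as t → +∞. (0,∞) carries the subspace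
topology and order of ℝ. -/
theorem stmt16 (η : ↥(Set.Ioi (0 : ℝ)) ≃ₜ ↥(Set.Ioi (0 : ℝ)))
    (hη : ∀ t : ↥(Set.Ioi (0 : ℝ)), (η t : ℝ) < (t : ℝ)) :
    ∃ g : ↥(Set.Ioi (0 : ℝ)) → ℝ,
      StrictAnti g ∧ Continuous g ∧ Function.Surjective g ∧
      (∀ t : ↥(Set.Ioi (0 : ℝ)), g (η t) = g t + 1) ∧
      Filter.Tendsto g (Filter.comap (Subtype.val) (nhdsWithin 0 (Set.Ioi 0)))
        Filter.atTop ∧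
      Filter.Tendsto g (Filter.comap (Subtype.val) Filter.atTop) Filter.atBot := by
  let e : ℝ ≃o Ioi (0 : ℝ) := Real.expOrderIso
  let F : ℝ ≃ₜ ℝ := e.toHomeomorph.trans (η.trans e.toHomeomorph.symm)
  have hF : ∀ x, F x < x := fun x ↦ by simpa [F] using e.symm.strictMono (hη (e x))
  let q : ℝ ≃o ℝ :=
    (F.continuous.strictMono_of_injective_of_lt F.injective hF).orderIsoOfSurjective F F.surjective
  have hq : ∀ x, q x < x := hF
  have hqe : ∀ t, q (e.symm t) = e.symm (η t) := fun t ↦ by simp [q, F]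
  have hanti : StrictAnti (OrderIso.timeFunction q ∘ e.symm) :=
    (OrderIso.strictAnti_timeFunction hq).comp_strictMono e.symm.strictMono
  have hsurj : Surjective (OrderIso.timeFunction q ∘ e.symm) :=
    (OrderIso.surjective_timeFunction hq).comp e.symm.surjective
  refine ⟨OrderIso.timeFunction q ∘ e.symm, hanti,
    (OrderIso.continuous_timeFunction hq).comp e.symm.continuous, hsurj,
    fun t ↦ by simp only [comp_apply, ← hqe, OrderIso.timeFunction_self_apply hq], ?_, ?_⟩
  · rw [comap_coe_Ioi_nhdsGT]
    exact tendsto_atBot_atTop_of_antitone hanti.antitone fun b ↦ (hsurj b).imp fun _ h ↦ h.ge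
  · rw [← atTop_Ioi_eq]
    exact tendsto_atTop_atBot_of_antitone hanti.antitone fun b ↦ (hsurj b).imp fun _ h ↦ h.le
end

section
/- Let X be a connected, locally connected topological space, and let C ⊆ X be a closed subset whose topological frontier (boundary) is nonempty and connected. Then C is connected. -/
/-!
If a closed set `C` splits along disjoint closed sets `u ∪ v` and its connected frontier lies in
`u`, then `C ∩ v` avoids the frontier, so it lies in the interior of `C` and equals
`interior C \ u`; being both open and closed in the connected space, it is empty (it cannot be
everything, since the frontier is nonempty and lies in `u`).
-/

open Set

section

variable {X : Type*} [TopologicalSpace X]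

theorem IsClosed.isClopen_inter_of_frontier_subset {C u v : Set X} (hC : IsClosed C)
    (hu : IsClosed u) (hv : IsClosed v) (huv : Disjoint u v) (hCuv : C ⊆ u ∪ v)
    (hfr : frontier C ⊆ u) : IsClopen (C ∩ v) := by
  have hCv : C ∩ v = interior C ∩ uᶜ := by
    ext x
    constructor
    · rintro ⟨hxC, hxv⟩
      have hxu : x ∉ u := fun hxu => huv.ne_of_mem hxu hxv rfl
      refine ⟨?_, hxu⟩
      by_contra hxi
      exact hxu (hfr ⟨subset_closure hxC, hxi⟩)
    · rintro ⟨hxi, hxu⟩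
      have hxC := interior_subset hxi
      exact ⟨hxC, (hCuv hxC).resolve_left hxu⟩
  exact ⟨hC.inter hv, hCv ▸ isOpen_interior.inter hu.isOpen_compl⟩

theorem IsClosed.subset_of_frontier_subset [ConnectedSpace X] {C u v : Set X} (hC : IsClosed C)
    (hu : IsClosed u) (hv : IsClosed v) (huv : Disjoint u v) (hCuv : C ⊆ u ∪ v)
    (hfr : frontier C ⊆ u) (hne : (frontier C).Nonempty) : C ⊆ u := by
  rcases isClopen_iff.1 (hC.isClopen_inter_of_frontier_subset hu hv huv hCuv hfr)
    with hempty | huniv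
  · intro x hxC
    refine (hCuv hxC).resolve_right fun hxv => ?_
    exact (hempty ▸ ⟨hxC, hxv⟩ : x ∈ (∅ : Set X))
  · obtain ⟨x, hx⟩ := hne
    exact absurd (huniv ▸ mem_univ x : x ∈ C ∩ v).2 (huv.notMem_of_mem_left (hfr hx))

end

theorem stmt17_general {X : Type*} [TopologicalSpace X] [ConnectedSpace X]
    (C : Set X) (hC : IsClosed C)
    (hfr : IsConnected (frontier C)) : IsConnected C := by
  have hfrC : frontier C ⊆ C := hC.frontier_subset
  refine ⟨hfr.nonempty.mono hfrC,
    (isPreconnected_iff_subset_of_fully_disjoint_closed hC).2 fun u v hu hv hCuv huv => ?_⟩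
  rcases (isPreconnected_iff_subset_of_fully_disjoint_closed isClosed_frontier).1
    hfr.isPreconnected u v hu hv (hfrC.trans hCuv) huv with hfru | hfrv
  · exact Or.inl (hC.subset_of_frontier_subset hu hv huv hCuv hfru hfr.nonempty)
  · exact Or.inr (hC.subset_of_frontier_subset hv hu huv.symm (union_comm u v ▸ hCuv) hfrv
      hfr.nonempty)

/-- in a connected, locally connected space, a closed set whose frontier
is nonempty and connected is itself connected. -/
theorem stmt17 {X : Type*} [TopologicalSpace X] [ConnectedSpace X]
    [LocallyConnectedSpace X] (C : Set X) (hC : IsClosed C)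
    (hfr : IsConnected (frontier C)) : IsConnected C :=
  stmt17_general C hC hfr
end
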